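/- arXiv:math-ph/0501066 — 8 statements merged into one kernel-verified Lean document; each statement's English description precedes it below -/
import Mathlib

section
/- Let N ≥ 4 and ℓ > 0, and let y : ℤ → ℝ² be an equilateral polygon with N vertices of side ℓ, that is, y_{n+N} = y_n and |y_{n+1} − y_n| = ℓ for all n. Then Σ_{n=1}^N |y_{n+2} − y_n| ≤ N ℓ sin(2π/N)/sin(π/N) = 2 N ℓ cos(π/N). -/
open Real Complex Finset

lemma geom_root (N : ℕ) (ζ : ℂ) (h1 : ζ ^ N = 1) (h2 : ζ ≠ 1) :
    ∑ k ∈ range N, ζ ^ k = 0 := by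
  rw [geom_sum_eq h2, h1]
  simp

lemma orth (N : ℕ) (hN : 0 < N) (ζ : ℂ) (hprim : IsPrimitiveRoot ζ N) (a b : ℕ) :
    ∑ k ∈ range N, ζ ^ (a * k) * (starRingEnd ℂ) (ζ ^ (b * k))
      = if a % N = b % N then (N : ℂ) else 0 := by
  have hζN : ζ ^ N = 1 := hprim.pow_eq_one
  have hnorm : ‖ζ‖ = 1 := Complex.norm_eq_one_of_pow_eq_one hζN hN.ne'
  have hconj : (starRingEnd ℂ) ζ = ζ ^ (N - 1) := by
    have hmul : ζ ^ (N - 1) * ζ = 1 := by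
      rw [← pow_succ, Nat.sub_add_cancel hN]; exact hζN
    rw [← Complex.inv_eq_conj hnorm]
    exact inv_eq_of_mul_eq_one_left hmul
  have key : ∀ k, ζ ^ (a * k) * (starRingEnd ℂ) (ζ ^ (b * k))
      = (ζ ^ (a + (N - 1) * b)) ^ k := by
    intro k
    rw [map_pow, hconj, ← pow_mul, ← pow_mul, ← pow_add]
    ring_nf
  rw [Finset.sum_congr rfl (fun k _ => key k)]
  have h1' : 1 ≤ N := hN
  have h3 : (N:ℤ) ∣ (a:ℤ) - b ↔ a % N = b % N := by
    rw [show (a:ℤ) - b = -((b:ℤ) - a) by ring, dvd_neg, ← Int.modEq_iff_dvd]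
    constructor
    · intro h
      have : (a:ℤ) % N = (b:ℤ) % N := h
      exact_mod_cast this
    · intro h
      show (a:ℤ) % N = (b:ℤ) % N
      exact_mod_cast h
  have hdvd : N ∣ (a + (N - 1) * b) ↔ a % N = b % N := by
    rw [← Int.natCast_dvd_natCast]
    have hcast : ((a + (N - 1) * b : ℕ) : ℤ) = ((a:ℤ) - b) + N * b := by
      push_cast [h1']; ring
    rw [hcast, dvd_add_left (⟨b, rfl⟩ : (N:ℤ) ∣ (N:ℤ) * b)]
    exact h3
  by_cases h : a % N = b % N
  · rw [if_pos h]
    have : ζ ^ (a + (N - 1) * b) = 1 := by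
      obtain ⟨c, hc⟩ := hdvd.mpr h
      rw [hc, pow_mul, hζN, one_pow]
    rw [this]
    simp
  · rw [if_neg h]
    apply geom_root
    · rw [← pow_mul, mul_comm, pow_mul, hζN, one_pow]
    · intro hone
      exact h (hdvd.mp ((hprim.pow_eq_one_iff_dvd _).mp hone))

lemma key_conv (N : ℕ) (hN : 0 < N) (ζ : ℂ) (hprim : IsPrimitiveRoot ζ N)
    (f : ℕ → ℂ) (a : ℕ → ℕ) :
    ∑ k ∈ range N, ((∑ n ∈ range N, f n * ζ ^ (a n * k)) *
        (starRingEnd ℂ) (∑ m ∈ range N, f m * ζ ^ (m * k)))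
      = N * ∑ n ∈ range N, f n * (starRingEnd ℂ) (f (a n % N)) := by
  calc ∑ k ∈ range N, ((∑ n ∈ range N, f n * ζ ^ (a n * k)) *
        (starRingEnd ℂ) (∑ m ∈ range N, f m * ζ ^ (m * k)))
      = ∑ k ∈ range N, ∑ n ∈ range N, ∑ m ∈ range N,
          (f n * (starRingEnd ℂ) (f m)) * (ζ ^ (a n * k) * (starRingEnd ℂ) (ζ ^ (m * k))) := by
        refine Finset.sum_congr rfl fun k _ => ?_
        rw [map_sum, Finset.sum_mul_sum]
        refine Finset.sum_congr rfl fun n _ => Finset.sum_congr rfl fun m _ => ?_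
        rw [map_mul]; ring
    _ = ∑ n ∈ range N, ∑ m ∈ range N,
          (f n * (starRingEnd ℂ) (f m)) * ∑ k ∈ range N, (ζ ^ (a n * k) * (starRingEnd ℂ) (ζ ^ (m * k))) := by
        rw [Finset.sum_comm]
        refine Finset.sum_congr rfl fun n _ => ?_
        rw [Finset.sum_comm]
        refine Finset.sum_congr rfl fun m _ => ?_
        rw [Finset.mul_sum]
    _ = ∑ n ∈ range N, ∑ m ∈ range N,
          (f n * (starRingEnd ℂ) (f m)) * (if a n % N = m % N then (N:ℂ) else 0) := by
        refine Finset.sum_congr rfl fun n _ => Finset.sum_congr rfl fun m _ => ?_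
        rw [orth N hN ζ hprim (a n) m]
    _ = ∑ n ∈ range N, (N:ℂ) * (f n * (starRingEnd ℂ) (f (a n % N))) := by
        refine Finset.sum_congr rfl fun n _ => ?_
        have hmem : a n % N ∈ range N := Finset.mem_range.mpr (Nat.mod_lt _ hN)
        have hrw : (∑ m ∈ range N, (f n * (starRingEnd ℂ) (f m)) * if a n % N = m % N then (N:ℂ) else 0)
             = ∑ m ∈ range N, if a n % N = m then (f n * (starRingEnd ℂ) (f m)) * N else 0 := by
          refine Finset.sum_congr rfl fun m hm => ?_
          rw [Nat.mod_eq_of_lt (Finset.mem_range.mp hm)]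
          split_ifs <;> simp
        rw [hrw, Finset.sum_ite_eq (range N) (a n % N)
          (fun m => (f n * (starRingEnd ℂ) (f m)) * N), if_pos hmem]
        ring
    _ = N * ∑ n ∈ range N, f n * (starRingEnd ℂ) (f (a n % N)) := by
        rw [Finset.mul_sum]

lemma cos_bound (N k : ℕ) (hN : 2 ≤ N) (hk1 : 1 ≤ k) (hk2 : k < N) :
    Real.cos (2 * π * k / N) ≤ Real.cos (2 * π / N) := by
  have hNpos : (0:ℝ) < N := by positivity
  have hπ := Real.pi_pos
  have main : ∀ m : ℕ, 1 ≤ m → 2 * m ≤ N →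
      Real.cos (2 * π * m / N) ≤ Real.cos (2 * π / N) := by
    intro m hm1 hm2
    apply Real.cos_le_cos_of_nonneg_of_le_pi
    · positivity
    · rw [div_le_iff₀ hNpos]
      have : (2:ℝ) * m ≤ N := by exact_mod_cast hm2
      nlinarith
    · have h1m : (1:ℝ) ≤ (m:ℝ) := by exact_mod_cast hm1
      calc 2 * π / (N:ℝ) = 2 * π * 1 / N := by ring
        _ ≤ 2 * π * m / N := by gcongr
  by_cases hk : 2 * k ≤ N
  · exact main k hk1 hk
  · have hm1 : 1 ≤ N - k := by omega
    have hm2 : 2 * (N - k) ≤ N := by omega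
    have hcast : (2 * π * k / N) = 2 * π - 2 * π * (N - k : ℕ) / N := by
      have : ((N - k : ℕ) : ℝ) = (N : ℝ) - k := by
        push_cast [le_of_lt hk2]; ring
      rw [this]
      field_simp
      ring
    rw [hcast, Real.cos_two_pi_sub]
    exact main (N - k) hm1 hm2

lemma spectral (N : ℕ) (hN : 2 ≤ N) (f : ℕ → ℂ)
    (hf : ∑ n ∈ range N, f n = 0) :
    ∑ n ∈ range N, (f n * (starRingEnd ℂ) (f ((n + 1) % N))).re
      ≤ Real.cos (2 * π / N) * ∑ n ∈ range N, Complex.normSq (f n) := by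
  have hN0 : 0 < N := by omega
  set ζ : ℂ := Complex.exp (2 * π * I / N) with hζdef
  have hprim : IsPrimitiveRoot ζ N := Complex.isPrimitiveRoot_exp N hN0.ne'
  set A : ℕ → ℂ := fun k => ∑ n ∈ range N, f n * ζ ^ (n * k) with hA
  have hA0 : A 0 = 0 := by simp [hA, hf]
  have hre : ∀ k : ℕ, (ζ ^ k).re = Real.cos (2 * π * k / N) := by
    intro k
    rw [hζdef, ← Complex.exp_nat_mul]
    have h : (k : ℂ) * (2 * ↑π * I / ↑N) = (↑(2 * π * k / (N : ℝ)) : ℂ) * I := by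
      push_cast
      ring
    rw [h, Complex.exp_ofReal_mul_I_re]
  have P1 : ∑ k ∈ range N, (A k * (starRingEnd ℂ) (A k))
      = N * ∑ n ∈ range N, f n * (starRingEnd ℂ) (f n) := by
    rw [key_conv N hN0 ζ hprim f (fun n => n)]
    congr 1
    refine Finset.sum_congr rfl fun n hn => ?_
    rw [show n % N = n from Nat.mod_eq_of_lt (Finset.mem_range.mp hn)]
  have P2 : ∑ k ∈ range N, ζ ^ k * (A k * (starRingEnd ℂ) (A k))
      = N * ∑ n ∈ range N, f n * (starRingEnd ℂ) (f ((n + 1) % N)) := by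
    rw [← key_conv N hN0 ζ hprim f (fun n => n + 1)]
    refine Finset.sum_congr rfl fun k _ => ?_
    rw [← mul_assoc]
    congr 1
    rw [hA, Finset.mul_sum]
    refine Finset.sum_congr rfl fun n _ => ?_
    rw [show (n + 1) * k = n * k + k by ring, pow_add]
    ring
  have e1 : ∑ k ∈ range N, Complex.normSq (A k)
      = N * ∑ n ∈ range N, Complex.normSq (f n) := by
    have h := congrArg Complex.re P1
    simpa [Complex.mul_conj, Complex.re_sum] using h
  have e2 : ∑ k ∈ range N, (ζ ^ k).re * Complex.normSq (A k)
      = N * ∑ n ∈ range N, (f n * (starRingEnd ℂ) (f ((n + 1) % N))).re := by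
    have h := congrArg Complex.re P2
    simpa [Complex.mul_conj, Complex.re_sum, Complex.mul_re] using h
  have hT : 0 ≤ ∑ k ∈ range N, (Real.cos (2 * π / N) - (ζ ^ k).re) * Complex.normSq (A k) := by
    apply Finset.sum_nonneg
    intro k hk
    rcases Nat.eq_zero_or_pos k with h0 | hpos
    · subst h0
      rw [hA0]
      simp
    · apply mul_nonneg
      · rw [hre k, sub_nonneg]
        exact cos_bound N k hN hpos (Finset.mem_range.mp hk)
      · exact Complex.normSq_nonneg _
  have expand : ∑ k ∈ range N, (Real.cos (2 * π / N) - (ζ ^ k).re) * Complex.normSq (A k)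
      = Real.cos (2 * π / N) * (∑ k ∈ range N, Complex.normSq (A k))
        - ∑ k ∈ range N, (ζ ^ k).re * Complex.normSq (A k) := by
    rw [Finset.mul_sum, ← Finset.sum_sub_distrib]
    refine Finset.sum_congr rfl fun k _ => ?_
    ring
  rw [expand, e1, e2] at hT
  have hNR : (0 : ℝ) < N := by exact_mod_cast hN0
  by_contra hcon
  push_neg at hcon
  nlinarith [hT, hcon, hNR]

lemma chord (ℓ c1 : ℝ) (hℓ : 0 < ℓ) (hc1 : 0 < c1) (a b : ℂ)
    (ha : ‖a‖ = ℓ) (hb : ‖b‖ = ℓ) :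
    ‖a + b‖ ≤ (ℓ^2 * (1 + 2*c1^2) + (a * (starRingEnd ℂ) b).re) / (2*c1*ℓ) := by
  set t := (a * (starRingEnd ℂ) b).re with ht
  have hsq : ‖a + b‖ ^ 2 = 2*ℓ^2 + 2*t := by
    rw [Complex.sq_norm, Complex.normSq_add, ← Complex.sq_norm a, ← Complex.sq_norm b, ha, hb]
    ring
  have hnn : 0 ≤ ‖a + b‖ := norm_nonneg _
  rw [le_div_iff₀ (by positivity)]
  have hB : 0 ≤ ℓ^2 * (1 + 2*c1^2) + t := by
    nlinarith [hsq, sq_nonneg (‖a+b‖), sq_nonneg c1, sq_nonneg (c1*ℓ)]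
  have hsA : 0 ≤ ‖a+b‖ * (2*c1*ℓ) := by positivity
  have h2 : (‖a+b‖ * (2*c1*ℓ))^2 ≤ (ℓ^2*(1+2*c1^2)+t)^2 := by
    have he : (‖a+b‖ * (2*c1*ℓ))^2 = (2*ℓ^2+2*t)*(2*c1*ℓ)^2 := by
      rw [mul_pow, hsq]
    rw [he]
    nlinarith [sq_nonneg (t + ℓ^2 - 2*c1^2*ℓ^2)]
  nlinarith [h2, hB, hsA]

/-- The inequality `D_{N,ℓ}^1(2)` holds globally: for any equilateral polygon
with `N ≥ 4` vertices and side length `ℓ`, the sum of the second chords is at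
most the value attained by the regular polygon, `N ℓ sin(2π/N)/sin(π/N) =
2 N ℓ cos(π/N)`. -/
theorem discrete_mean_chord_one_two
    (N : ℕ) (hN : 4 ≤ N) (ℓ : ℝ) (hℓ : 0 < ℓ)
    (y : ℤ → EuclideanSpace ℝ (Fin 2))
    (hper : ∀ n : ℤ, y (n + N) = y n)
    (hside : ∀ n : ℤ, ‖y (n + 1) - y n‖ = ℓ) :
    ∑ n ∈ Finset.Icc (1:ℤ) N, ‖y (n + 2) - y n‖ ≤
        N * ℓ * Real.sin (2 * π / N) / Real.sin (π / N) ∧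
    N * ℓ * Real.sin (2 * π / N) / Real.sin (π / N)
        = 2 * N * ℓ * Real.cos (π / N) := by
  have hπ := Real.pi_pos
  have hN0 : 0 < N := by omega
  have hNR : (0:ℝ) < N := by exact_mod_cast hN0
  have hN4R : (4:ℝ) ≤ N := by exact_mod_cast hN
  have hsinpos : 0 < Real.sin (π / N) := by
    apply Real.sin_pos_of_pos_of_lt_pi
    · positivity
    · rw [div_lt_iff₀ hNR]; nlinarith
  have hc1pos : 0 < Real.cos (π / N) := by
    apply Real.cos_pos_of_mem_Ioo
    constructor
    · have : (0:ℝ) < π / N := by positivity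
      nlinarith
    · rw [div_lt_div_iff₀ hNR (by norm_num : (0:ℝ) < 2)]
      nlinarith
  have heq : (N:ℝ) * ℓ * Real.sin (2*π/N) / Real.sin (π/N) = 2*N*ℓ*Real.cos (π/N) := by
    rw [show 2*π/(N:ℝ) = 2*(π/N) by ring, Real.sin_two_mul]
    field_simp
  refine ⟨?_, heq⟩
  rw [heq]
  set c1 := Real.cos (π/N) with hc1def
  -- complexification
  set C2 : EuclideanSpace ℝ (Fin 2) → ℂ := fun v => ⟨v 0, v 1⟩ with hC2
  have hC2abs : ∀ v, ‖C2 v‖ = ‖v‖ := by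
    intro v
    rw [Complex.norm_def, EuclideanSpace.norm_eq]
    congr 1
    simp [hC2, Complex.normSq_mk, Fin.sum_univ_two, Real.norm_eq_abs, sq_abs]
    ring
  have hC2sub : ∀ v w : EuclideanSpace ℝ (Fin 2), C2 v - C2 w = C2 (v - w) := by
    intro v w
    apply Complex.ext <;> simp [hC2]
  set G : ℕ → ℂ := fun i => C2 (y ((i:ℤ) + 1)) with hG
  set f : ℕ → ℂ := fun n => G (n+1) - G n with hfdef
  have habs' : ∀ a b : ℤ, ‖C2 (y a) - C2 (y b)‖ = ‖y a - y b‖ := by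
    intro a b
    rw [hC2sub, hC2abs]
  have hfabs : ∀ n : ℕ, ‖f n‖ = ℓ := by
    intro n
    show ‖G (n+1) - G n‖ = ℓ
    rw [hG]
    simp only []
    rw [habs']
    have : ((n+1:ℕ):ℤ) + 1 = ((n:ℤ) + 1) + 1 := by push_cast; ring
    rw [this, hside ((n:ℤ)+1)]
  have hfsum : ∑ n ∈ range N, f n = 0 := by
    show ∑ n ∈ range N, (G (n+1) - G n) = 0
    rw [Finset.sum_range_sub G N]
    have : y ((N:ℤ) + 1) = y ((0:ℤ) + 1) := by
      rw [show (N:ℤ) + 1 = 1 + N by ring, hper 1]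
      try norm_num
    rw [hG]
    simp only []
    rw [this]
    simp
  have hfnormSq : ∀ n, Complex.normSq (f n) = ℓ^2 := by
    intro n
    rw [← Complex.sq_norm, hfabs]
  have hspec := spectral N (by omega) f hfsum
  have hnq : ∑ n ∈ range N, Complex.normSq (f n) = N * ℓ^2 := by
    rw [Finset.sum_congr rfl (fun n _ => hfnormSq n), Finset.sum_const, Finset.card_range,
      nsmul_eq_mul]
  rw [hnq] at hspec
  have hfN : f N = f 0 := by
    show G (N+1) - G N = G 1 - G 0
    rw [hG]
    simp only []
    have e1 : y (((N+1:ℕ):ℤ) + 1) = y (((1:ℕ):ℤ) + 1) := by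
      push_cast
      rw [show (N:ℤ) + 1 + 1 = 2 + N by ring, hper 2]
      try norm_num
    have e2 : y (((N:ℕ):ℤ) + 1) = y (((0:ℕ):ℤ) + 1) := by
      rw [show (N:ℤ) + 1 = 1 + N by ring, hper 1]
      try norm_num
    rw [e1, e2]
  have hmain : ∑ n ∈ Finset.Icc (1:ℤ) N, ‖y (n+2) - y n‖
      = ∑ j ∈ range N, ‖f j + f ((j+1) % N)‖ := by
    rw [show Finset.Icc (1:ℤ) N = Finset.map ⟨fun j : ℕ => (j:ℤ)+1, fun a b h => by simpa using h⟩ (range N) from ?_, Finset.sum_map]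
    · refine Finset.sum_congr rfl fun j hj => ?_
      show ‖y (((j:ℤ)+1)+2) - y ((j:ℤ)+1)‖ = _
      have hchord : ‖y (((j:ℤ)+1)+2) - y ((j:ℤ)+1)‖ = ‖f (j+1) + f j‖ := by
        have hsplit : f (j+1) + f j = C2 (y ((j:ℤ)+3)) - C2 (y ((j:ℤ)+1)) := by
          show (G (j+2) - G (j+1)) + (G (j+1) - G j) = _
          rw [hG]
          simp only []
          push_cast
          ring_nf
        rw [show (j:ℤ)+1+2 = (j:ℤ)+3 from by ring, hsplit, habs']
      rw [hchord]
      rcases lt_or_eq_of_le (Nat.succ_le_of_lt (Finset.mem_range.mp hj)) with hlt | heq'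
      · rw [Nat.mod_eq_of_lt hlt, add_comm]
      · have h2 : j + 1 = N := heq'
        rw [h2, Nat.mod_self, hfN, add_comm]
    · ext n
      simp only [Finset.mem_map, Finset.mem_range, Finset.mem_Icc, Function.Embedding.coeFn_mk]
      constructor
      · intro h
        refine ⟨(n-1).toNat, ?_, ?_⟩
        · omega
        · show ((n-1).toNat : ℤ) + 1 = n
          omega
      · rintro ⟨j, hj, rfl⟩
        show 1 ≤ (j:ℤ) + 1 ∧ (j:ℤ) + 1 ≤ N
        omega
  rw [hmain]
  have hA : (0:ℝ) < 2 * c1 * ℓ := by positivity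
  calc ∑ j ∈ range N, ‖f j + f ((j+1) % N)‖
      ≤ ∑ j ∈ range N, (ℓ^2 * (1 + 2*c1^2) + (f j * (starRingEnd ℂ) (f ((j+1) % N))).re) / (2*c1*ℓ) :=
        Finset.sum_le_sum fun j _ => chord ℓ c1 hℓ hc1pos _ _ (hfabs j) (hfabs _)
    _ = ((N:ℝ) * (ℓ^2 * (1 + 2*c1^2)) + ∑ j ∈ range N, (f j * (starRingEnd ℂ) (f ((j+1) % N))).re) / (2*c1*ℓ) := by
        rw [← Finset.sum_div, Finset.sum_add_distrib, Finset.sum_const, Finset.card_range,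
          nsmul_eq_mul]
    _ ≤ ((N:ℝ) * (ℓ^2 * (1 + 2*c1^2)) + Real.cos (2*π/N) * (N * ℓ^2)) / (2*c1*ℓ) := by
        gcongr
    _ = 2*N*ℓ*c1 := by
        have hcos2 : Real.cos (2*π/(N:ℝ)) = 2*c1^2 - 1 := by
          rw [show 2*π/(N:ℝ) = 2*(π/N) by ring, Real.cos_two_mul, hc1def]
        rw [hcos2]
        field_simp
        ring
end

section
/- Let N ≥ 4, ℓ > 0, and p ∈ (0, 1], and let y : ℤ → ℝ² be an equilateral polygon with N vertices of side ℓ (y_{n+N} = y_n and |y_{n+1} − y_n| = ℓ for all n). Then Σ_{n=1}^N |y_{n+2} − y_n|^p ≤ N ℓ^p sin^p(2π/N)/sin^p(π/N); if moreover |y_{n+2} − y_n| > 0 for all n, then also Σ_{n=1}^N |y_{n+2} − y_n|^{−p} ≥ N sin^p(π/N)/(ℓ^p sin^p(2π/N)). -/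
open Real

noncomputable def ee (N : ℕ) (j : ℤ) : ℂ :=
  Complex.exp (((2 * Real.pi * (j : ℝ) / N : ℝ) : ℂ) * Complex.I)

lemma ee_add (N : ℕ) (a b : ℤ) : ee N (a + b) = ee N a * ee N b := by
  rw [ee, ee, ee, ← Complex.exp_add]
  congr 1
  push_cast
  ring

lemma ee_conj (N : ℕ) (a : ℤ) : (starRingEnd ℂ) (ee N a) = ee N (-a) := by
  rw [ee, ee, ← Complex.exp_conj, map_mul, Complex.conj_ofReal, Complex.conj_I]
  congr 1
  push_cast
  ring

lemma ee_zero (N : ℕ) : ee N 0 = 1 := by simp [ee]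

lemma ee_re (N : ℕ) (a : ℤ) : (ee N a).re = Real.cos (2 * Real.pi * a / N) :=
  Complex.exp_ofReal_mul_I_re _

lemma ee_nat_mul (N : ℕ) (j : ℤ) (k : ℕ) : ee N (j * k) = ee N j ^ k := by
  rw [ee, ee, ← Complex.exp_nat_mul]
  congr 1
  push_cast
  ring

lemma ee_eq_one (N : ℕ) (hN : 0 < N) {j : ℤ} (h : (N : ℤ) ∣ j) : ee N j = 1 := by
  obtain ⟨t, rfl⟩ := h
  have hN0 : (N : ℝ) ≠ 0 := Nat.cast_ne_zero.mpr hN.ne'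
  have harg : (2 * Real.pi * ((N * t : ℤ) : ℝ) / N : ℝ) = (t : ℝ) * (2 * Real.pi) := by
    push_cast
    field_simp
  rw [ee, harg]
  have : (((t : ℝ) * (2 * Real.pi) : ℝ) : ℂ) * Complex.I = (t : ℂ) * (2 * Real.pi * Complex.I) := by
    push_cast
    ring
  rw [this, Complex.exp_int_mul_two_pi_mul_I]

lemma ee_ne_one (N : ℕ) (hN : 0 < N) {j : ℤ} (h : ¬ (N : ℤ) ∣ j) : ee N j ≠ 1 := by
  intro hone
  rw [ee, Complex.exp_eq_one_iff] at hone
  obtain ⟨m, hm⟩ := hone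
  have him := congrArg Complex.im hm
  simp [Complex.mul_im, Complex.ofReal_re, Complex.ofReal_im] at him
  -- him : 2 * π * j / N = m * (2 * π)  (roughly)
  have hN0 : (N : ℝ) ≠ 0 := Nat.cast_ne_zero.mpr hN.ne'
  have hπ : Real.pi ≠ 0 := Real.pi_ne_zero
  have hj : (j : ℝ) = (m : ℝ) * N := by
    field_simp at him
    nlinarith [Real.pi_pos, him]
  have : j = m * N := by exact_mod_cast hj
  exact h ⟨m, by linarith [this]⟩

lemma ee_orth (N : ℕ) (hN : 0 < N) (j : ℤ) :
    ∑ k ∈ Finset.range N, ee N (j * k) = if (N : ℤ) ∣ j then (N : ℂ) else 0 := by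
  split_ifs with h
  · calc ∑ k ∈ Finset.range N, ee N (j * k) = ∑ _k ∈ Finset.range N, (1 : ℂ) :=
          Finset.sum_congr rfl fun k _ => ee_eq_one N hN (h.mul_right _)
      _ = (N : ℂ) := by simp
  · have hne := ee_ne_one N hN h
    calc ∑ k ∈ Finset.range N, ee N (j * k) = ∑ k ∈ Finset.range N, ee N j ^ k :=
          Finset.sum_congr rfl fun k _ => ee_nat_mul N j k
      _ = (ee N j ^ N - 1) / (ee N j - 1) := geom_sum_eq hne N
      _ = 0 := by
          rw [← ee_nat_mul, show j * (N : ℤ) = (N : ℤ) * j by ring,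
            ee_eq_one N hN ⟨j, rfl⟩, sub_self, zero_div]

lemma per_mul {α : Type*} (f : ℤ → α) (N : ℕ) (h : ∀ n, f (n + N) = f n) (t n : ℤ) :
    f (n + N * t) = f n := by
  induction t using Int.induction_on with
  | zero => simp
  | succ k ih => rw [show n + (N : ℤ) * (k + 1) = (n + N * k) + N by ring, h, ih]
  | pred k ih =>
      have h2 := h (n + (N : ℤ) * (-(k : ℤ) - 1))
      rw [show n + (N : ℤ) * (-(k : ℤ) - 1) + N = n + N * (-(k : ℤ)) by ring] at h2
      rw [← h2, ih]

lemma per_congr {α : Type*} (f : ℤ → α) (N : ℕ) (h : ∀ n, f (n + N) = f n)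
    {a b : ℤ} (hd : (N : ℤ) ∣ (a - b)) : f a = f b := by
  obtain ⟨t, ht⟩ := hd
  rw [show a = b + N * t by linarith, per_mul f N h t b]

lemma wirtinger (N : ℕ) (hN : 0 < N) (f : ℤ → ℂ)
    (hper : ∀ n, f (n + N) = f n)
    (hsum : ∑ n ∈ Finset.range N, f n = 0) :
    (∑ n ∈ Finset.range N, f (n + 1) * (starRingEnd ℂ) (f n)).re ≤
      Real.cos (2 * Real.pi / N) * ∑ n ∈ Finset.range N, Complex.normSq (f n) := by
  classical
  set S : ℕ → ℂ := fun k => ∑ n ∈ Finset.range N, f n * ee N (-(k * n)) with hS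
  have hP : ∀ r : ℕ, ∑ k ∈ Finset.range N, ee N (r * k) * (S k * (starRingEnd ℂ) (S k))
      = (N : ℂ) * ∑ m ∈ Finset.range N, f (m + r) * (starRingEnd ℂ) (f m) := by
    intro r
    have hterm : ∀ k : ℕ, ee N (r * k) * (S k * (starRingEnd ℂ) (S k)) =
        ∑ m ∈ Finset.range N, ∑ n ∈ Finset.range N,
          f n * (starRingEnd ℂ) (f m) * ee N (((m : ℤ) - n + r) * k) := by
      intro k
      have hconj : (starRingEnd ℂ) (S k)
          = ∑ m ∈ Finset.range N, (starRingEnd ℂ) (f m) * ee N (k * m) := by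
        rw [hS, map_sum]
        exact Finset.sum_congr rfl fun m _ => by rw [map_mul, ee_conj, neg_neg]
      rw [hconj, hS,
        mul_comm (∑ n ∈ Finset.range N, f (n : ℤ) * ee N (-((k : ℤ) * n)))
          (∑ m ∈ Finset.range N, (starRingEnd ℂ) (f (m : ℤ)) * ee N ((k : ℤ) * m)),
        Finset.sum_mul_sum, Finset.mul_sum]
      refine Finset.sum_congr rfl fun m _ => ?_
      rw [Finset.mul_sum]
      refine Finset.sum_congr rfl fun n _ => ?_
      have hee : ee N (r * k) * (ee N (-(k * n)) * ee N (k * m))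
          = ee N (((m : ℤ) - n + r) * k) := by
        rw [← ee_add, ← ee_add]
        congr 1
        ring
      calc ee N (r * k) * ((starRingEnd ℂ) (f m) * ee N (k * m) * (f n * ee N (-(k * n))))
          = f n * (starRingEnd ℂ) (f m) * (ee N (r * k) * (ee N (-(k * n)) * ee N (k * m))) := by
            ring
        _ = f n * (starRingEnd ℂ) (f m) * ee N (((m : ℤ) - n + r) * k) := by rw [hee]
    calc ∑ k ∈ Finset.range N, ee N (r * k) * (S k * (starRingEnd ℂ) (S k))
        = ∑ k ∈ Finset.range N, ∑ m ∈ Finset.range N, ∑ n ∈ Finset.range N,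
            f n * (starRingEnd ℂ) (f m) * ee N (((m : ℤ) - n + r) * k) :=
          Finset.sum_congr rfl fun k _ => hterm k
      _ = ∑ m ∈ Finset.range N, ∑ n ∈ Finset.range N, ∑ k ∈ Finset.range N,
            f n * (starRingEnd ℂ) (f m) * ee N (((m : ℤ) - n + r) * k) := by
          rw [Finset.sum_comm]
          exact Finset.sum_congr rfl fun m _ => Finset.sum_comm
      _ = ∑ m ∈ Finset.range N, ∑ n ∈ Finset.range N,
            f n * (starRingEnd ℂ) (f m) *
              (if (N : ℤ) ∣ ((m : ℤ) - n + r) then (N : ℂ) else 0) := by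
          refine Finset.sum_congr rfl fun m _ => Finset.sum_congr rfl fun n _ => ?_
          rw [← Finset.mul_sum, ee_orth N hN]
      _ = ∑ m ∈ Finset.range N, (N : ℂ) * (f (m + r) * (starRingEnd ℂ) (f m)) := by
          refine Finset.sum_congr rfl fun m hm => ?_
          rw [Finset.sum_eq_single ((m + r) % N)]
          · have h0 : ((m + r : ℕ) : ℤ) = ((m + r) % N : ℕ) + (N : ℤ) * ((m + r) / N : ℕ) := by
              exact_mod_cast (Nat.mod_add_div (m + r) N).symm
            have hdvd : (N : ℤ) ∣ ((m : ℤ) - ((m + r) % N : ℕ) + r) := by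
              refine ⟨((m + r) / N : ℕ), ?_⟩
              push_cast at h0 ⊢
              linarith
            rw [if_pos hdvd]
            have hf : f (((m + r) % N : ℕ) : ℤ) = f ((m : ℤ) + r) := by
              refine per_congr f N hper ?_
              refine ⟨-(((m + r) / N : ℕ) : ℤ), ?_⟩
              push_cast at h0 ⊢
              linarith
            rw [hf]
            ring
          · intro n hn hne
            rw [if_neg, mul_zero]
            intro hdvd
            apply hne
            have hdvd2 : (N : ℤ) ∣ (((m + r : ℕ) : ℤ) - n) := by
              obtain ⟨t, ht⟩ := hdvd
              refine ⟨t, ?_⟩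
              push_cast at ht ⊢
              linarith
            have hmod : (n : ℤ) ≡ ((m + r : ℕ) : ℤ) [ZMOD (N : ℤ)] :=
              Int.ModEq.symm (Int.modEq_iff_dvd.mpr ?_)
            case _ =>
              have hmodN : n % N = (m + r) % N := by
                have h' := hmod
                rw [Int.ModEq] at h'
                omega
              rw [← hmodN, Nat.mod_eq_of_lt (Finset.mem_range.mp hn)]
            case _ =>
              obtain ⟨t, ht⟩ := hdvd2
              exact ⟨-t, by push_cast at ht ⊢; linarith⟩
          · intro hc
            exact absurd (Finset.mem_range.mpr (Nat.mod_lt _ hN)) hc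
      _ = (N : ℂ) * ∑ m ∈ Finset.range N, f (m + r) * (starRingEnd ℂ) (f m) := by
          rw [← Finset.mul_sum]
  have hS0 : S 0 = 0 := by
    rw [hS]
    calc (∑ n ∈ Finset.range N, f n * ee N (-((0 : ℕ) * n))) = ∑ n ∈ Finset.range N, f n := by
          refine Finset.sum_congr rfl fun n _ => ?_
          rw [show (-(((0 : ℕ) : ℤ) * n) : ℤ) = 0 by push_cast; ring, ee_zero, mul_one]
      _ = 0 := hsum
  -- Parseval
  have hP0 := hP 0
  have hP1 := hP 1
  have hParseval : ∑ k ∈ Finset.range N, Complex.normSq (S k)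
      = (N : ℝ) * ∑ n ∈ Finset.range N, Complex.normSq (f n) := by
    have h := hP0
    simp only [Nat.cast_zero, zero_mul, ee_zero, one_mul, add_zero, Complex.mul_conj] at h
    have h2 := congrArg Complex.re h
    simpa using h2
  have hSecond : ∑ k ∈ Finset.range N, Real.cos (2 * Real.pi * k / N) * Complex.normSq (S k)
      = (N : ℝ) * (∑ m ∈ Finset.range N, f (m + 1) * (starRingEnd ℂ) (f m)).re := by
    have h := hP1
    simp only [Nat.cast_one, one_mul, Complex.mul_conj] at h
    have h2 := congrArg Complex.re h
    rw [Complex.re_sum] at h2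
    have hL : ∀ k ∈ Finset.range N, (ee N (k : ℤ) * (Complex.normSq (S k) : ℂ)).re
        = Real.cos (2 * Real.pi * k / N) * Complex.normSq (S k) := by
      intro k _
      rw [mul_comm, Complex.re_ofReal_mul, ee_re]
      push_cast
      ring
    rw [Finset.sum_congr rfl hL] at h2
    rw [show ((N : ℕ) : ℂ) = (((N : ℝ)) : ℂ) by push_cast; rfl, Complex.re_ofReal_mul] at h2
    exact h2
  -- monotonicity of cosine values
  have hNR : (0 : ℝ) < N := by exact_mod_cast hN
  have hhalf : ∀ k : ℕ, 1 ≤ k → 2 * k ≤ N →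
      Real.cos (2 * Real.pi * k / N) ≤ Real.cos (2 * Real.pi / N) := by
    intro k h1 h2
    have hk1 : (1 : ℝ) ≤ (k : ℝ) := by exact_mod_cast h1
    have hk2 : (2 : ℝ) * k ≤ N := by exact_mod_cast h2
    refine Real.cos_le_cos_of_nonneg_of_le_pi (by positivity) ?_ ?_
    · rw [div_le_iff₀ hNR]
      nlinarith [Real.pi_pos]
    · rw [div_le_div_iff₀ hNR hNR]
      have h' : (1 : ℝ) * (2 * Real.pi * N) ≤ (k : ℝ) * (2 * Real.pi * N) :=
        mul_le_mul_of_nonneg_right hk1 (by positivity)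
      nlinarith [h']
  have hcos : ∀ k : ℕ, 1 ≤ k → k < N →
      Real.cos (2 * Real.pi * k / N) ≤ Real.cos (2 * Real.pi / N) := by
    intro k h1 h2
    by_cases hk : 2 * k ≤ N
    · exact hhalf k h1 hk
    · have h1' : 1 ≤ N - k := by omega
      have h2' : 2 * (N - k) ≤ N := by omega
      have heq : Real.cos (2 * Real.pi * k / N) = Real.cos (2 * Real.pi * (N - k : ℕ) / N) := by
        rw [← Real.cos_two_pi_sub]
        congr 1
        have hNk : ((N - k : ℕ) : ℝ) = (N : ℝ) - k := by
          push_cast [Nat.cast_sub h2.le]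
          ring
        rw [hNk]
        field_simp
      rw [heq]
      exact hhalf (N - k) h1' h2'
  have hterm_le : ∀ k ∈ Finset.range N,
      Real.cos (2 * Real.pi * k / N) * Complex.normSq (S k)
        ≤ Real.cos (2 * Real.pi / N) * Complex.normSq (S k) := by
    intro k hk
    rcases Nat.eq_zero_or_pos k with rfl | hk1
    · simp [hS0]
    · exact mul_le_mul_of_nonneg_right (hcos k hk1 (Finset.mem_range.mp hk))
        (Complex.normSq_nonneg _)
  have hle : ∑ k ∈ Finset.range N, Real.cos (2 * Real.pi * k / N) * Complex.normSq (S k)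
      ≤ Real.cos (2 * Real.pi / N) * ((N : ℝ) * ∑ n ∈ Finset.range N, Complex.normSq (f n)) := by
    calc ∑ k ∈ Finset.range N, Real.cos (2 * Real.pi * k / N) * Complex.normSq (S k)
        ≤ ∑ k ∈ Finset.range N, Real.cos (2 * Real.pi / N) * Complex.normSq (S k) :=
          Finset.sum_le_sum hterm_le
      _ = Real.cos (2 * Real.pi / N) * ∑ k ∈ Finset.range N, Complex.normSq (S k) := by
          rw [← Finset.mul_sum]
      _ = _ := by rw [hParseval]
  rw [hSecond] at hle
  have h3 : (N : ℝ) * (∑ n ∈ Finset.range N, f (n + 1) * (starRingEnd ℂ) (f n)).re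
      ≤ (N : ℝ) * (Real.cos (2 * Real.pi / N) * ∑ n ∈ Finset.range N, Complex.normSq (f n)) := by
    calc (N : ℝ) * (∑ n ∈ Finset.range N, f (n + 1) * (starRingEnd ℂ) (f n)).re
        ≤ Real.cos (2 * Real.pi / N) * ((N : ℝ) * ∑ n ∈ Finset.range N, Complex.normSq (f n)) :=
          hle
      _ = _ := by ring
  exact le_of_mul_le_mul_left h3 hNR

lemma sum_Icc_int {M : Type*} [AddCommMonoid M] (N : ℕ) (g : ℤ → M) :
    ∑ n ∈ Finset.Icc (1 : ℤ) N, g n = ∑ i ∈ Finset.range N, g ((i : ℤ) + 1) := by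
  refine Finset.sum_nbij' (fun n => (n - 1).toNat) (fun i => (i : ℤ) + 1) ?_ ?_ ?_ ?_ ?_
  · intro a ha
    simp only [Finset.mem_Icc] at ha
    simp only [Finset.mem_range]
    omega
  · intro a ha
    simp only [Finset.mem_range] at ha
    simp only [Finset.mem_Icc]
    omega
  · intro a ha
    simp only [Finset.mem_Icc] at ha
    omega
  · intro a _
    omega
  · intro a ha
    simp only [Finset.mem_Icc] at ha
    congr 1
    omega

lemma sum_range_shift {M : Type*} [AddCommGroup M] (N : ℕ) (g : ℤ → M) (hg : g N = g 0) :
    ∑ i ∈ Finset.range N, g ((i : ℤ) + 1) = ∑ i ∈ Finset.range N, g i := by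
  have h1 := Finset.sum_range_succ (fun i : ℕ => g i) N
  have h2 := Finset.sum_range_succ' (fun i : ℕ => g i) N
  have h3 : ∑ i ∈ Finset.range N, g ((i : ℤ) + 1)
      = ∑ i ∈ Finset.range N, (fun i : ℕ => g i) (i + 1) := by
    refine Finset.sum_congr rfl fun i _ => ?_
    norm_cast
  rw [h3]
  have := h1.symm.trans h2
  -- this : Σ_{i<N} g ↑i + g ↑N = Σ_{i<N} g ↑(i+1) + g ↑0
  simp only [Nat.cast_zero] at this
  rw [hg] at this
  exact (add_right_cancel this).symm

lemma abs_complexify (a b : EuclideanSpace ℝ (Fin 2)) :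
    ‖((a 0 : ℝ) : ℂ) + (a 1 : ℝ) * Complex.I
      - (((b 0 : ℝ) : ℂ) + (b 1 : ℝ) * Complex.I)‖ = ‖a - b‖ := by
  have h1 : ((a 0 : ℝ) : ℂ) + (a 1 : ℝ) * Complex.I - (((b 0 : ℝ) : ℂ) + (b 1 : ℝ) * Complex.I)
      = ((a 0 - b 0 : ℝ) : ℂ) + ((a 1 - b 1 : ℝ) : ℂ) * Complex.I := by
    push_cast
    ring
  rw [h1, Complex.norm_def, Complex.normSq_add_mul_I, EuclideanSpace.norm_eq]
  congr 1
  rw [Fin.sum_univ_two]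
  simp [Real.norm_eq_abs, sq_abs]

/-- The inequalities `D_{N,ℓ}^{±p}(2)` hold globally for every `p ∈ (0,1]`:
for any equilateral polygon with `N ≥ 4` vertices and side length `ℓ`, the sum
of the `p`-th powers of the second chords is at most the regular-polygon value,
and (if these chords are nonzero) the sum of their `(-p)`-th powers is at least
the regular-polygon value. -/
theorem discrete_mean_chord_p_two
    (N : ℕ) (hN : 4 ≤ N) (ℓ : ℝ) (hℓ : 0 < ℓ)
    (p : ℝ) (hp : p ∈ Set.Ioc (0:ℝ) 1)
    (y : ℤ → EuclideanSpace ℝ (Fin 2))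
    (hper : ∀ n : ℤ, y (n + N) = y n)
    (hside : ∀ n : ℤ, ‖y (n + 1) - y n‖ = ℓ) :
    ∑ n ∈ Finset.Icc (1:ℤ) N, ‖y (n + 2) - y n‖ ^ p ≤
        N * ℓ ^ p * Real.sin (2 * π / N) ^ p / Real.sin (π / N) ^ p ∧
    ((∀ n : ℤ, 0 < ‖y (n + 2) - y n‖) →
      ∑ n ∈ Finset.Icc (1:ℤ) N, ‖y (n + 2) - y n‖ ^ (-p) ≥
        N * Real.sin (π / N) ^ p / (ℓ ^ p * Real.sin (2 * π / N) ^ p)) := by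
  obtain ⟨hp0, hp1⟩ := hp
  have hN0 : 0 < N := by omega
  have hNR : (0 : ℝ) < N := by exact_mod_cast hN0
  have hNR4 : (4 : ℝ) ≤ N := by exact_mod_cast hN
  have hπN_pos : 0 < π / N := by positivity
  have hπN_lt : π / N < π / 2 := by
    rw [div_lt_div_iff₀ hNR two_pos]
    nlinarith [Real.pi_pos]
  have hsin_pos : 0 < Real.sin (π / N) :=
    Real.sin_pos_of_pos_of_lt_pi hπN_pos (by nlinarith [Real.pi_pos])
  have hcos_pos : 0 < Real.cos (π / N) :=
    Real.cos_pos_of_mem_Ioo ⟨by linarith, hπN_lt⟩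
  have hsin2 : Real.sin (2 * π / N) = 2 * Real.sin (π / N) * Real.cos (π / N) := by
    rw [show 2 * π / (N:ℝ) = 2 * (π / N) by ring, Real.sin_two_mul]
  set M : ℝ := 2 * ℓ * Real.cos (π / N) with hM
  have hM_pos : 0 < M := by positivity
  set F : ℤ → ℂ := fun n => ((y n 0 : ℝ) : ℂ) + (y n 1 : ℝ) * Complex.I with hF
  set f : ℤ → ℂ := fun n => F (n + 1) - F n with hf
  have hFper : ∀ n : ℤ, F (n + N) = F n := by
    intro n
    simp only [hF]
    rw [hper n]
  have hfper : ∀ n : ℤ, f (n + N) = f n := by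
    intro n
    simp only [hf]
    rw [show n + (N:ℤ) + 1 = (n + 1) + N by ring, hFper, hFper]
  have habs : ∀ n : ℤ, ‖f n‖ = ℓ := by
    intro n
    simp only [hf, hF]
    rw [abs_complexify, hside n]
  have hchord : ∀ n : ℤ, ‖y (n + 2) - y n‖ = ‖f (n + 1) + f n‖ := by
    intro n
    have h1 : f (n + 1) + f n
        = ((y (n+2) 0 : ℝ) : ℂ) + (y (n+2) 1 : ℝ) * Complex.I
          - (((y n 0 : ℝ) : ℂ) + (y n 1 : ℝ) * Complex.I) := by
      simp only [hf, hF]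
      rw [show n + 1 + 1 = n + 2 by ring]
      ring
    rw [h1, abs_complexify]
  set c : ℤ → ℝ := fun n => ‖f (n + 1) + f n‖ with hc
  have hchord' : ∀ n : ℤ, ‖y (n + 2) - y n‖ = c n := hchord
  have hc_nonneg : ∀ n : ℤ, 0 ≤ c n := fun n => norm_nonneg _
  have hcN : c (N : ℤ) = c 0 := by
    simp only [hc]
    rw [show (N:ℤ) + 1 = 1 + N by ring, hfper 1, show ((N:ℕ):ℤ) = 0 + N by ring, hfper 0]
    norm_num
  have hcard : (Finset.Icc (1:ℤ) (N:ℤ)).card = N := by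
    rw [Int.card_Icc]
    simp
  have hcsq : ∀ n : ℤ, c n ^ 2 = Complex.normSq (f (n + 1)) + Complex.normSq (f n)
      + 2 * ((f (n + 1)) * (starRingEnd ℂ) (f n)).re := by
    intro n
    simp only [hc]
    rw [← Complex.normSq_add, Complex.sq_norm]
  have hgoal_sum : ∀ q : ℝ, ∑ n ∈ Finset.Icc (1:ℤ) N, ‖y (n + 2) - y n‖ ^ q
      = ∑ n ∈ Finset.Icc (1:ℤ) N, c n ^ q :=
    fun q => Finset.sum_congr rfl fun n _ => by rw [hchord' n]
  have hsumf : ∑ n ∈ Finset.range N, f (n : ℤ) = 0 := by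
    have h1 : ∀ i : ℕ, f (i : ℤ) = F ((i + 1 : ℕ) : ℤ) - F (i : ℤ) := by
      intro i
      simp only [hf]
      norm_cast
    have h2 : ∑ n ∈ Finset.range N, f (n : ℤ)
        = ∑ i ∈ Finset.range N, ((fun j : ℕ => F (j : ℤ)) (i + 1) - (fun j : ℕ => F (j : ℤ)) i) :=
      Finset.sum_congr rfl fun i _ => h1 i
    rw [h2, Finset.sum_range_sub (fun j : ℕ => F (j : ℤ))]
    have h3 : F ((N:ℕ) : ℤ) = F 0 := by rw [show ((N:ℕ):ℤ) = 0 + N by ring, hFper]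
    simp [h3]
  clear_value F f c
  clear hF hf hc hFper
  have hwirt := wirtinger N hN0 f hfper hsumf
  have hnsq : ∀ n : ℤ, Complex.normSq (f n) = ℓ ^ 2 := by
    intro n
    rw [← Complex.sq_norm, habs]
  have hfN : f ((N:ℕ) : ℤ) = f 0 := by rw [show ((N:ℕ):ℤ) = 0 + N by ring, hfper]
  have hnsq_sum : ∑ i ∈ Finset.range N, Complex.normSq (f (i : ℤ)) = N * ℓ ^ 2 := by
    calc ∑ i ∈ Finset.range N, Complex.normSq (f (i : ℤ))
        = ∑ _i ∈ Finset.range N, ℓ ^ 2 := Finset.sum_congr rfl fun i _ => hnsq _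
      _ = N * ℓ ^ 2 := by rw [Finset.sum_const, Finset.card_range, nsmul_eq_mul]
  have hnsq_sum' : ∑ i ∈ Finset.range N, Complex.normSq (f ((i : ℤ) + 1)) = N * ℓ ^ 2 := by
    rw [sum_range_shift N (fun n => Complex.normSq (f n)) (by rw [hfN])]
    exact hnsq_sum
  have hwirt' : (∑ i ∈ Finset.range N, f ((i:ℤ) + 1) * (starRingEnd ℂ) (f (i:ℤ))).re
      ≤ Real.cos (2 * π / N) * (N * ℓ ^ 2) := by
    rw [← hnsq_sum]
    exact hwirt
  have hsq : ∑ n ∈ Finset.Icc (1:ℤ) N, c n ^ 2 ≤ N * M ^ 2 := by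
    rw [sum_Icc_int N (fun n => c n ^ 2),
      sum_range_shift N (fun n => c n ^ 2) (by rw [hcN])]
    have hterm := hcsq
    calc ∑ i ∈ Finset.range N, c (i : ℤ) ^ 2
        = ∑ i ∈ Finset.range N, (Complex.normSq (f ((i:ℤ) + 1)) + Complex.normSq (f (i:ℤ))
            + 2 * ((f ((i:ℤ) + 1)) * (starRingEnd ℂ) (f (i:ℤ))).re) :=
          Finset.sum_congr rfl fun i _ => hterm (i : ℤ)
      _ = (∑ i ∈ Finset.range N, Complex.normSq (f ((i:ℤ) + 1)))
          + (∑ i ∈ Finset.range N, Complex.normSq (f (i:ℤ)))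
          + 2 * (∑ i ∈ Finset.range N, f ((i:ℤ) + 1) * (starRingEnd ℂ) (f (i:ℤ))).re := by
          rw [Finset.sum_add_distrib, Finset.sum_add_distrib, Complex.re_sum, Finset.mul_sum]
      _ ≤ N * ℓ ^ 2 + N * ℓ ^ 2 + 2 * (Real.cos (2 * π / N) * (N * ℓ ^ 2)) := by
          rw [hnsq_sum, hnsq_sum']
          linarith [hwirt']
      _ = N * M ^ 2 := by
          have hcs := Real.cos_sq (π / N)
          rw [hM, show 2 * π / (N:ℝ) = 2 * (π / N) by ring]
          linear_combination (-4 * (N:ℝ) * ℓ ^ 2) * hcs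
  have hsum_c : ∑ n ∈ Finset.Icc (1:ℤ) N, c n ≤ N * M := by
    have h1 := sq_sum_le_card_mul_sum_sq (s := Finset.Icc (1:ℤ) (N:ℤ)) (f := c)
    rw [hcard] at h1
    have h3 : (∑ n ∈ Finset.Icc (1:ℤ) N, c n) ^ 2 ≤ (N:ℝ) * (N * M ^ 2) :=
      le_trans h1 (mul_le_mul_of_nonneg_left hsq hNR.le)
    have hs0 : 0 ≤ ∑ n ∈ Finset.Icc (1:ℤ) N, c n :=
      Finset.sum_nonneg fun n _ => hc_nonneg n
    nlinarith [h3, hs0, mul_pos hNR hM_pos]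
  have hA_le : ∑ n ∈ Finset.Icc (1:ℤ) N, c n ^ p ≤ N * M ^ p := by
    have hw : ∀ n ∈ Finset.Icc (1:ℤ) (N:ℤ), (0:ℝ) ≤ 1 / N := fun _ _ => by positivity
    have hw' : ∑ _n ∈ Finset.Icc (1:ℤ) (N:ℤ), (1:ℝ) / N = 1 := by
      rw [Finset.sum_const, hcard, nsmul_eq_mul]
      field_simp
    have hz : ∀ n ∈ Finset.Icc (1:ℤ) (N:ℤ), (0:ℝ) ≤ c n ^ p :=
      fun n _ => Real.rpow_nonneg (hc_nonneg n) p
    have hq : (1:ℝ) ≤ 1 / p := by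
      rw [le_div_iff₀ hp0]
      linarith
    have hjensen := Real.arith_mean_le_rpow_mean (Finset.Icc (1:ℤ) (N:ℤ))
      (fun _ => 1 / N) (fun n => c n ^ p) hw hw' hz hq
    rw [one_div_one_div] at hjensen
    have hzz : ∀ n : ℤ, (c n ^ p) ^ ((1:ℝ) / p) = c n := by
      intro n
      rw [← Real.rpow_mul (hc_nonneg n), mul_one_div, div_self hp0.ne', Real.rpow_one]
    rw [Finset.sum_congr rfl (fun n _ => by rw [hzz n] :
        ∀ n ∈ Finset.Icc (1:ℤ) (N:ℤ), 1 / (N:ℝ) * (c n ^ p) ^ ((1:ℝ)/p) = 1 / (N:ℝ) * c n)]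
      at hjensen
    rw [← Finset.mul_sum, ← Finset.mul_sum] at hjensen
    have hmean_le : 1 / (N:ℝ) * ∑ n ∈ Finset.Icc (1:ℤ) N, c n ≤ M := by
      rw [div_mul_eq_mul_div, one_mul, div_le_iff₀ hNR]
      calc ∑ n ∈ Finset.Icc (1:ℤ) N, c n ≤ N * M := hsum_c
        _ = M * N := by ring
    have hrpow : (1 / (N:ℝ) * ∑ n ∈ Finset.Icc (1:ℤ) N, c n) ^ p ≤ M ^ p :=
      Real.rpow_le_rpow
        (mul_nonneg (by positivity) (Finset.sum_nonneg fun n _ => hc_nonneg n))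
        hmean_le hp0.le
    have h5 : 1 / (N:ℝ) * ∑ n ∈ Finset.Icc (1:ℤ) N, c n ^ p ≤ M ^ p :=
      le_trans hjensen hrpow
    have h6 := mul_le_mul_of_nonneg_left h5 hNR.le
    rw [show (N:ℝ) * (1 / (N:ℝ) * ∑ n ∈ Finset.Icc (1:ℤ) N, c n ^ p)
        = ∑ n ∈ Finset.Icc (1:ℤ) N, c n ^ p by field_simp] at h6
    exact h6
  have h2cos_pos : (0:ℝ) < 2 * Real.cos (π / N) := by positivity
  have hM_rpow : (N:ℝ) * ℓ ^ p * Real.sin (2 * π / N) ^ p / Real.sin (π / N) ^ p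
      = N * M ^ p := by
    rw [hsin2, hM]
    rw [show (2:ℝ) * Real.sin (π/N) * Real.cos (π/N)
        = Real.sin (π/N) * (2 * Real.cos (π/N)) by ring]
    rw [Real.mul_rpow hsin_pos.le h2cos_pos.le]
    rw [show (2:ℝ) * ℓ * Real.cos (π/N) = ℓ * (2 * Real.cos (π/N)) by ring]
    rw [Real.mul_rpow hℓ.le h2cos_pos.le]
    have hsp : Real.sin (π/N) ^ p ≠ 0 := (Real.rpow_pos_of_pos hsin_pos p).ne'
    field_simp
  constructor
  · rw [hgoal_sum p, hM_rpow]
    exact hA_le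
  · intro hpos
    have hcpos : ∀ n : ℤ, 0 < c n := fun n => by
      have h := hpos n
      rw [hchord' n] at h
      exact h
    have hCS := Finset.sum_mul_sq_le_sq_mul_sq (Finset.Icc (1:ℤ) (N:ℤ))
      (fun n => c n ^ (p/2)) (fun n => c n ^ (-(p/2)))
    have hfg : ∀ n ∈ Finset.Icc (1:ℤ) (N:ℤ), c n ^ (p/2) * c n ^ (-(p/2)) = 1 := by
      intro n _
      rw [← Real.rpow_add (hcpos n)]
      simp
    have hf2 : ∀ n : ℤ, (c n ^ (p/2)) ^ 2 = c n ^ p := by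
      intro n
      rw [sq, ← Real.rpow_add (hcpos n), show p/2 + p/2 = p by ring]
    have hg2 : ∀ n : ℤ, (c n ^ (-(p/2))) ^ 2 = c n ^ (-p) := by
      intro n
      rw [sq, ← Real.rpow_add (hcpos n), show -(p/2) + -(p/2) = -p by ring]
    rw [Finset.sum_congr rfl hfg,
      Finset.sum_congr rfl (fun n _ => hf2 n :
        ∀ n ∈ Finset.Icc (1:ℤ) (N:ℤ), (c n ^ (p/2)) ^ 2 = c n ^ p),
      Finset.sum_congr rfl (fun n _ => hg2 n :
        ∀ n ∈ Finset.Icc (1:ℤ) (N:ℤ), (c n ^ (-(p/2))) ^ 2 = c n ^ (-p)),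
      Finset.sum_const, hcard, nsmul_eq_mul, mul_one] at hCS
    -- hCS : (N:ℝ)^2 ≤ (Σ c^p) * (Σ c^(-p))
    have hApos : 0 < ∑ n ∈ Finset.Icc (1:ℤ) N, c n ^ p := by
      refine Finset.sum_pos (fun n _ => Real.rpow_pos_of_pos (hcpos n) p) ?_
      refine ⟨1, ?_⟩
      simp only [Finset.mem_Icc]
      omega
    have hRHS_eq : (N:ℝ) * Real.sin (π/N) ^ p / (ℓ ^ p * Real.sin (2 * π / N) ^ p)
        = N / M ^ p := by
      rw [hsin2, hM]
      rw [show (2:ℝ) * Real.sin (π/N) * Real.cos (π/N)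
          = Real.sin (π/N) * (2 * Real.cos (π/N)) by ring]
      rw [Real.mul_rpow hsin_pos.le h2cos_pos.le]
      rw [show (2:ℝ) * ℓ * Real.cos (π/N) = ℓ * (2 * Real.cos (π/N)) by ring]
      rw [Real.mul_rpow hℓ.le h2cos_pos.le]
      have hsp : Real.sin (π/N) ^ p ≠ 0 := (Real.rpow_pos_of_pos hsin_pos p).ne'
      have hlp : ℓ ^ p ≠ 0 := (Real.rpow_pos_of_pos hℓ p).ne'
      have h2p : (2 * Real.cos (π/N)) ^ p ≠ 0 := (Real.rpow_pos_of_pos h2cos_pos p).ne'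
      field_simp
    rw [ge_iff_le, hgoal_sum (-p), hRHS_eq]
    have hMp_pos : 0 < M ^ p := Real.rpow_pos_of_pos hM_pos p
    calc (N:ℝ) / M ^ p = (N:ℝ) ^ 2 / ((N:ℝ) * M ^ p) := by
          rw [sq, mul_div_mul_left _ _ hNR.ne']
      _ ≤ (N:ℝ) ^ 2 / ∑ n ∈ Finset.Icc (1:ℤ) N, c n ^ p :=
          div_le_div_of_nonneg_left (by positivity) hApos hA_le
      _ ≤ ∑ n ∈ Finset.Icc (1:ℤ) N, c n ^ (-p) := by
          rw [div_le_iff₀ hApos]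
          calc (N:ℝ)^2 ≤ (∑ n ∈ Finset.Icc (1:ℤ) N, c n ^ p)
                * ∑ n ∈ Finset.Icc (1:ℤ) N, c n ^ (-p) := hCS
            _ = _ := by ring
end

section
/- Let L > 0 and let γ : ℝ → ℝ be a locally integrable L-periodic function with ∫₀^L γ(s) ds = 2π. Set β(s) := ∫₀^s γ(s') ds' and Γ(s) := (∫₀^s cos β(s') ds', ∫₀^s sin β(s') ds'), and assume ∫₀^L cos β(s') ds' = ∫₀^L sin β(s') ds' = 0. Then for every u ∈ (0, L/2], ∫₀^L |Γ(s+u) − Γ(s)|² ds = 2 ∫₀^u (u − x) ∫₀^L cos(β(z + x/2) − β(z − x/2)) dz dx. -/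
set_option maxHeartbeats 1600000

open MeasureTheory Real

private lemma swap_aux {f : ℝ → ℝ → ℝ} (hf : Continuous (Function.uncurry f)) {p q : ℝ}
    (hp : 0 ≤ p) (hq : 0 ≤ q) :
    ∫ s in (0:ℝ)..p, ∫ t in (0:ℝ)..q, f s t = ∫ t in (0:ℝ)..q, ∫ s in (0:ℝ)..p, f s t := by
  rw [intervalIntegral.integral_of_le hp, intervalIntegral.integral_of_le hq]
  simp_rw [intervalIntegral.integral_of_le hq, intervalIntegral.integral_of_le hp]
  apply MeasureTheory.integral_integral_swap
  have h1 : IntegrableOn (Function.uncurry f) (Set.Ioc 0 p ×ˢ Set.Ioc 0 q) volume :=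
    (hf.integrableOn_Icc (X := ℝ × ℝ) (a := (0,0)) (b := (p,q))).mono_set
      (by rw [Set.Icc_prod_eq]; exact Set.prod_mono Set.Ioc_subset_Icc_self Set.Ioc_subset_Icc_self)
  rw [Measure.prod_restrict]
  rwa [IntegrableOn, Measure.volume_eq_prod] at h1

private lemma norm_sq_aux (a b c d : ℝ) :
    ‖(WithLp.equiv 2 (Fin 2 → ℝ)).symm ![a,b] - (WithLp.equiv 2 (Fin 2 → ℝ)).symm ![c,d]‖^2
      = (a - c)^2 + (b - d)^2 := by
  rw [EuclideanSpace.norm_eq, Real.sq_sqrt (by positivity)]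
  simp [Fin.sum_univ_two, WithLp.equiv_symm_apply, PiLp.toLp_apply, Real.norm_eq_abs, sq_abs]

private lemma final_aux {F : ℝ → ℝ} (hF : Continuous F) (hFe : ∀ x, F (-x) = F x) {u : ℝ}
    (hu : 0 ≤ u) :
    ∫ a in (0:ℝ)..u, ∫ b in (0:ℝ)..u, F (a - b) = 2 * ∫ x in (0:ℝ)..u, (u - x) * F x := by
  clear hu
  set Φ : ℝ → ℝ := fun t => ∫ x in (0:ℝ)..t, F x with hΦdef
  have hΦc : Continuous Φ :=
    intervalIntegral.continuous_primitive (fun a b => hF.intervalIntegrable a b) 0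
  have hΦd : ∀ x : ℝ, HasDerivAt Φ (F x) x := fun x => (hF.integral_hasStrictDerivAt 0 x).hasDerivAt
  have hΦodd : ∀ x, Φ (-x) = -Φ x := by
    intro x
    have h1 : ∫ t in (0:ℝ)..x, F (-t) = ∫ t in (-x)..(-(0:ℝ)), F t :=
      intervalIntegral.integral_comp_neg F
    simp only [hFe, neg_zero] at h1
    have h2 : Φ (-x) = -∫ t in (-x)..(0:ℝ), F t := intervalIntegral.integral_symm (-x) 0
    rw [h2, ← h1]
  have hinner : ∀ a : ℝ, ∫ b in (0:ℝ)..u, F (a - b) = Φ a - Φ (a - u) := by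
    intro a
    rw [intervalIntegral.integral_comp_sub_left F a, sub_zero]
    exact (intervalIntegral.integral_interval_sub_left (hF.intervalIntegrable 0 a)
      (hF.intervalIntegrable 0 (a-u))).symm
  rw [intervalIntegral.integral_congr (g := fun a => Φ a - Φ (a - u)) (fun a _ => hinner a)]
  have hc2 : Continuous fun a : ℝ => Φ (a - u) := by fun_prop
  rw [intervalIntegral.integral_sub (hΦc.intervalIntegrable 0 u) (hc2.intervalIntegrable 0 u)]
  have h3 : ∫ a in (0:ℝ)..u, Φ (a - u) = -∫ a in (0:ℝ)..u, Φ a := by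
    rw [intervalIntegral.integral_comp_sub_right Φ u]
    simp only [zero_sub, sub_self]
    rw [show ∫ a in (-u)..(0:ℝ), Φ a = ∫ a in (-u)..(-(0:ℝ)), Φ a by norm_num,
      ← intervalIntegral.integral_comp_neg Φ]
    simp_rw [hΦodd]
    rw [intervalIntegral.integral_neg]
  rw [h3, sub_neg_eq_add, ← two_mul]
  congr 1
  have hparts := intervalIntegral.integral_mul_deriv_eq_deriv_mul
    (a := 0) (b := u) (u := fun x => u - x) (u' := fun _ => (-1 : ℝ)) (v := Φ) (v' := F)
    (fun x _ => (hasDerivAt_const x u).sub (hasDerivAt_id x) |>.congr_deriv (by ring))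
    (fun x _ => hΦd x)
    (intervalIntegrable_const) (hF.intervalIntegrable 0 u)
  simp only [sub_self, zero_mul, sub_zero, hΦdef, intervalIntegral.integral_zero,
    neg_one_mul] at hparts
  rw [hparts, intervalIntegral.integral_same, intervalIntegral.integral_neg]
  simp [hΦdef]

/-- For a closed curve `Γ` of length `L` parametrized by arc length, with
bending angle `β` and curvature `γ`, the mean square chord of arc length `u`
can be rewritten as
`c²_Γ(u) = 2 ∫₀ᵘ (u-x) ∫₀ᴸ cos(β(z+x/2) - β(z-x/2)) dz dx`. -/
theorem mean_square_chord_formula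
    (L : ℝ) (hL : 0 < L)
    (γ : ℝ → ℝ) (hloc : LocallyIntegrable γ)
    (hper : ∀ s, γ (s + L) = γ s)
    (htot : (∫ s in (0:ℝ)..L, γ s) = 2 * π)
    (β : ℝ → ℝ) (hβ : ∀ s, β s = ∫ t in (0:ℝ)..s, γ t)
    (Γ : ℝ → EuclideanSpace ℝ (Fin 2))
    (hΓ : ∀ s, Γ s = (WithLp.equiv 2 (Fin 2 → ℝ)).symm
        ![∫ t in (0:ℝ)..s, Real.cos (β t), ∫ t in (0:ℝ)..s, Real.sin (β t)])
    (hclose₁ : (∫ t in (0:ℝ)..L, Real.cos (β t)) = 0)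
    (hclose₂ : (∫ t in (0:ℝ)..L, Real.sin (β t)) = 0)
    (u : ℝ) (hu : u ∈ Set.Ioc 0 (L / 2)) :
    ∫ s in (0:ℝ)..L, ‖Γ (s + u) - Γ s‖ ^ 2 =
      2 * ∫ x in (0:ℝ)..u, (u - x) *
        ∫ z in (0:ℝ)..L, Real.cos (β (z + x / 2) - β (z - x / 2)) := by
  obtain ⟨hu0, huL⟩ := hu
  have hγI : ∀ a b : ℝ, IntervalIntegrable γ volume a b :=
    fun a b => (hloc.integrableOn_isCompact isCompact_uIcc).intervalIntegrable
  have hβc : Continuous β := by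
    rw [show β = fun s => ∫ t in (0:ℝ)..s, γ t from funext hβ]
    exact intervalIntegral.continuous_primitive (fun a b => hγI a b) 0
  have hβper : ∀ s, β (s + L) = β s + 2 * π := by
    intro s
    have h1 : (∫ t in L..(s+L), γ t) = ∫ t in (0:ℝ)..s, γ t := by
      have h := intervalIntegral.integral_comp_add_right (a := (0:ℝ)) (b := s) γ L
      simp only [hper, zero_add] at h
      exact h.symm
    have h2 := intervalIntegral.integral_add_adjacent_intervals (hγI 0 L) (hγI L (s+L))
    rw [hβ (s + L), ← h2, htot, h1, ← hβ s]; ring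
  set F : ℝ → ℝ := fun x => ∫ z in (0:ℝ)..L, Real.cos (β (z + x/2) - β (z - x/2)) with hFdef
  have hFc : Continuous F := by
    apply intervalIntegral.continuous_parametric_intervalIntegral_of_continuous'
    show Continuous fun p : ℝ × ℝ => Real.cos (β (p.2 + p.1/2) - β (p.2 - p.1/2))
    fun_prop
  have hFe : ∀ x, F (-x) = F x := by
    intro x
    apply intervalIntegral.integral_congr
    intro z _
    simp only
    rw [← Real.cos_neg (β (z + x/2) - β (z - x/2))]
    have e1 : z + (-x)/2 = z - x/2 := by ring
    have e2 : z - (-x)/2 = z + x/2 := by ring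
    rw [e1, e2]
    congr 1; ring
  have hI : ∀ a b : ℝ, (∫ s in (0:ℝ)..L, Real.cos (β (s + a) - β (s + b))) = F (a - b) := by
    intro a b
    set k : ℝ → ℝ := fun z => Real.cos (β (z + (a - b)/2) - β (z - (a - b)/2)) with hk
    have hkper : Function.Periodic k L := by
      intro z
      simp only [hk]
      have e1 : z + L + (a-b)/2 = (z + (a-b)/2) + L := by ring
      have e2 : z + L - (a-b)/2 = (z - (a-b)/2) + L := by ring
      rw [e1, e2, hβper, hβper]
      congr 1; ring
    have h1 : ∀ s : ℝ, Real.cos (β (s + a) - β (s + b)) = k (s + (a + b)/2) := by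
      intro s
      simp only [hk]
      have e1 : s + (a+b)/2 + (a-b)/2 = s + a := by ring
      have e2 : s + (a+b)/2 - (a-b)/2 = s + b := by ring
      rw [e1, e2]
    rw [intervalIntegral.integral_congr (g := fun s => k (s + (a+b)/2)) (fun s _ => h1 s)]
    rw [intervalIntegral.integral_comp_add_right k ((a+b)/2), zero_add]
    have hp := hkper.intervalIntegral_add_eq ((a+b)/2) 0
    rw [zero_add] at hp
    rw [show L + (a+b)/2 = (a+b)/2 + L by ring, hp]
  -- the chord identity
  have hcc : Continuous fun t => Real.cos (β t) := Real.continuous_cos.comp hβc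
  have hsc : Continuous fun t => Real.sin (β t) := Real.continuous_sin.comp hβc
  have hchord : ∀ s : ℝ, ‖Γ (s + u) - Γ s‖^2
      = ∫ a in (0:ℝ)..u, ∫ b in (0:ℝ)..u, Real.cos (β (s + a) - β (s + b)) := by
    intro s
    have hCa : ∫ a in (0:ℝ)..u, Real.cos (β (s + a))
        = (∫ t in (0:ℝ)..(s+u), Real.cos (β t)) - (∫ t in (0:ℝ)..s, Real.cos (β t)) := by
      rw [intervalIntegral.integral_interval_sub_left (hcc.intervalIntegrable 0 (s+u))
        (hcc.intervalIntegrable 0 s)]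
      have h := intervalIntegral.integral_comp_add_left (a := (0:ℝ)) (b := u)
        (fun t => Real.cos (β t)) s
      rw [add_zero] at h
      exact h
    have hSa : ∫ a in (0:ℝ)..u, Real.sin (β (s + a))
        = (∫ t in (0:ℝ)..(s+u), Real.sin (β t)) - (∫ t in (0:ℝ)..s, Real.sin (β t)) := by
      rw [intervalIntegral.integral_interval_sub_left (hsc.intervalIntegrable 0 (s+u))
        (hsc.intervalIntegrable 0 s)]
      have h := intervalIntegral.integral_comp_add_left (a := (0:ℝ)) (b := u)
        (fun t => Real.sin (β t)) s
      rw [add_zero] at h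
      exact h
    have hnorm : ‖Γ (s + u) - Γ s‖^2
        = (∫ a in (0:ℝ)..u, Real.cos (β (s + a)))^2 + (∫ a in (0:ℝ)..u, Real.sin (β (s + a)))^2 := by
      rw [hΓ (s + u), hΓ s, norm_sq_aux, hCa, hSa]
    rw [hnorm]
    set C := ∫ a in (0:ℝ)..u, Real.cos (β (s + a)) with hC
    set S := ∫ a in (0:ℝ)..u, Real.sin (β (s + a)) with hS
    have key : ∀ a : ℝ, ∫ b in (0:ℝ)..u, Real.cos (β (s + a) - β (s + b))
        = Real.cos (β (s + a)) * C + Real.sin (β (s + a)) * S := by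
      intro a
      have : ∀ b : ℝ, Real.cos (β (s + a) - β (s + b))
          = Real.cos (β (s + a)) * Real.cos (β (s + b))
            + Real.sin (β (s + a)) * Real.sin (β (s + b)) := fun b => Real.cos_sub _ _
      rw [intervalIntegral.integral_congr (fun b _ => this b)]
      have i1 : IntervalIntegrable (fun b : ℝ => Real.cos (β (s + a)) * Real.cos (β (s + b)))
          volume 0 u := (by fun_prop : Continuous fun b : ℝ =>
          Real.cos (β (s + a)) * Real.cos (β (s + b))).intervalIntegrable 0 u
      have i2 : IntervalIntegrable (fun b : ℝ => Real.sin (β (s + a)) * Real.sin (β (s + b)))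
          volume 0 u := (by fun_prop : Continuous fun b : ℝ =>
          Real.sin (β (s + a)) * Real.sin (β (s + b))).intervalIntegrable 0 u
      rw [intervalIntegral.integral_add i1 i2]
      rw [intervalIntegral.integral_const_mul, intervalIntegral.integral_const_mul]
    rw [intervalIntegral.integral_congr (fun a _ => key a)]
    have j1 : IntervalIntegrable (fun a : ℝ => Real.cos (β (s + a)) * C) volume 0 u :=
      (by fun_prop : Continuous fun a : ℝ => Real.cos (β (s + a)) * C).intervalIntegrable 0 u
    have j2 : IntervalIntegrable (fun a : ℝ => Real.sin (β (s + a)) * S) volume 0 u :=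
      (by fun_prop : Continuous fun a : ℝ => Real.sin (β (s + a)) * S).intervalIntegrable 0 u
    rw [intervalIntegral.integral_add j1 j2]
    rw [intervalIntegral.integral_mul_const, intervalIntegral.integral_mul_const, ← hC, ← hS]
    ring
  -- continuity for the swaps
  have hcont2 : ∀ a : ℝ, Continuous (Function.uncurry fun s b : ℝ =>
      Real.cos (β (s + a) - β (s + b))) := by
    intro a
    show Continuous fun p : ℝ × ℝ => Real.cos (β (p.1 + a) - β (p.1 + p.2))
    fun_prop
  have hcont1 : Continuous (Function.uncurry fun s a : ℝ =>
      ∫ b in (0:ℝ)..u, Real.cos (β (s + a) - β (s + b))) := by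
    show Continuous fun p : ℝ × ℝ => ∫ b in (0:ℝ)..u, Real.cos (β (p.1 + p.2) - β (p.1 + b))
    apply intervalIntegral.continuous_parametric_intervalIntegral_of_continuous'
    show Continuous fun q : (ℝ × ℝ) × ℝ => Real.cos (β (q.1.1 + q.1.2) - β (q.1.1 + q.2))
    fun_prop
  show ∫ s in (0:ℝ)..L, ‖Γ (s + u) - Γ s‖ ^ 2 = 2 * ∫ x in (0:ℝ)..u, (u - x) * F x
  calc ∫ s in (0:ℝ)..L, ‖Γ (s + u) - Γ s‖ ^ 2
      = ∫ s in (0:ℝ)..L, ∫ a in (0:ℝ)..u, ∫ b in (0:ℝ)..u,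
          Real.cos (β (s + a) - β (s + b)) :=
        intervalIntegral.integral_congr (fun s _ => hchord s)
    _ = ∫ a in (0:ℝ)..u, ∫ s in (0:ℝ)..L, ∫ b in (0:ℝ)..u,
          Real.cos (β (s + a) - β (s + b)) := swap_aux hcont1 hL.le hu0.le
    _ = ∫ a in (0:ℝ)..u, ∫ b in (0:ℝ)..u, ∫ s in (0:ℝ)..L,
          Real.cos (β (s + a) - β (s + b)) := by
        apply intervalIntegral.integral_congr
        intro a _
        exact swap_aux (hcont2 a) hL.le hu0.le
    _ = ∫ a in (0:ℝ)..u, ∫ b in (0:ℝ)..u, F (a - b) := by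
        apply intervalIntegral.integral_congr
        intro a _
        exact intervalIntegral.integral_congr (fun b _ => hI a b)
    _ = 2 * ∫ x in (0:ℝ)..u, (u - x) * F x := final_aux hFc hFe hu0.le
end

section
/- Let L > 0 and let γ : ℝ → ℝ be a locally integrable L-periodic function with ∫₀^L γ(s) ds = 2π; set β(s) := ∫₀^s γ(s') ds' and Γ(s) := (∫₀^s cos β(s') ds', ∫₀^s sin β(s') ds'), and assume ∫₀^L cos β(s') ds' = ∫₀^L sin β(s') ds' = 0. Let u ∈ (0, L/2] and assume 0 ≤ β(z + x/2) − β(z − x/2) ≤ π/2 for all z ∈ ℝ and all x ∈ (0, u]. Then ∫₀^L |Γ(s+u) − Γ(s)|² ds ≤ (L³/π²)·sin²(πu/L). -/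
open MeasureTheory Real

/-- `|sin (n x)| ≤ n |sin x|` for natural `n`. -/
lemma aux_abs_sin_nat_mul_le (n : ℕ) (x : ℝ) : |Real.sin (n * x)| ≤ n * |Real.sin x| := by
  induction n with
  | zero => simp
  | succ n ih =>
    have h1 : ((n : ℝ) + 1) * x = n * x + x := by ring
    push_cast
    rw [h1, Real.sin_add]
    have h2 := abs_add_le (Real.sin (n * x) * Real.cos x) (Real.cos (n * x) * Real.sin x)
    have h3 : |Real.sin (n * x) * Real.cos x| ≤ |Real.sin (n * x)| := by
      rw [abs_mul]
      nlinarith [abs_nonneg (Real.sin (n * x)), Real.abs_cos_le_one x,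
        abs_nonneg (Real.cos x)]
    have h4 : |Real.cos (n * x) * Real.sin x| ≤ |Real.sin x| := by
      rw [abs_mul]
      nlinarith [abs_nonneg (Real.sin x), Real.abs_cos_le_one (n * x),
        abs_nonneg (Real.cos (n * x))]
    linarith

/-- `|sin (n x)| ≤ |n| |sin x|` for integer `n`. -/
lemma aux_abs_sin_int_mul_le (n : ℤ) (x : ℝ) : |Real.sin (n * x)| ≤ |(n : ℝ)| * |Real.sin x| := by
  obtain ⟨m, rfl | rfl⟩ := Int.eq_nat_or_neg n
  · push_cast
    simpa [Nat.abs_cast] using aux_abs_sin_nat_mul_le m x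
  · push_cast
    rw [show -(m : ℝ) * x = -((m : ℝ) * x) by ring, Real.sin_neg, abs_neg, abs_neg]
    simpa [Nat.abs_cast] using aux_abs_sin_nat_mul_le m x

/-- `‖exp(iθ) - 1‖² = 4 sin²(θ/2)`. -/
lemma aux_norm_exp_sub_one_sq (θ : ℝ) :
    ‖Complex.exp (θ * Complex.I) - 1‖ ^ 2 = 4 * Real.sin (θ / 2) ^ 2 := by
  have hre : (Complex.exp (θ * Complex.I) - 1).re = Real.cos θ - 1 := by
    simp [Complex.exp_ofReal_mul_I_re]
  have him : (Complex.exp (θ * Complex.I) - 1).im = Real.sin θ := by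
    simp [Complex.exp_ofReal_mul_I_im]
  rw [Complex.sq_norm, Complex.normSq_apply, hre, him]
  have h1 : Real.sin (θ / 2) ^ 2 = 1 / 2 - Real.cos θ / 2 := by
    have := Real.sin_sq_eq_half_sub (θ / 2)
    rwa [show 2 * (θ / 2) = θ by ring] at this
  have h2 := Real.sin_sq_add_cos_sq θ
  nlinarith

/-- lift of a periodic function to the circle agrees with the function. -/
lemma aux_liftIco_coe {L : ℝ} [Fact (0 < L)] (hL : 0 < L) {g : ℝ → ℂ} (hg : Function.Periodic g L) (x : ℝ) :
    AddCircle.liftIco L 0 g ↑x = g x := by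
  have hmem : toIcoMod hL 0 x ∈ Set.Ico 0 (0 + L) := toIcoMod_mem_Ico hL 0 x
  have hcoe : ((toIcoMod hL 0 x : ℝ) : AddCircle L) = (x : AddCircle L) := by
    rw [← self_sub_toIcoDiv_zsmul hL 0 x, QuotientAddGroup.mk_sub]
    have : ((toIcoDiv hL 0 x • L : ℝ) : AddCircle L) = 0 :=
      (QuotientAddGroup.eq_zero_iff _).2 (AddSubgroup.zsmul_mem_zmultiples L _)
    rw [this, sub_zero]
  have h1 : AddCircle.liftIco L 0 g ↑(toIcoMod hL 0 x) = g (toIcoMod hL 0 x) :=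
    AddCircle.liftIco_coe_apply hmem
  rw [← hcoe, h1]
  conv_lhs => rw [← self_sub_toIcoDiv_zsmul hL 0 x]
  rw [hg.sub_zsmul_eq]

/-- Fubini for continuous functions on a product of intervals. -/
lemma aux_intervalIntegral_swap {a b c d : ℝ} (hab : a ≤ b) (hcd : c ≤ d) {g : ℝ → ℝ → ℂ}
    (hg : Continuous fun p : ℝ × ℝ => g p.1 p.2) :
    ∫ s in a..b, ∫ v in c..d, g s v = ∫ v in c..d, ∫ s in a..b, g s v := by
  rw [intervalIntegral.integral_of_le hab, intervalIntegral.integral_of_le hcd]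
  simp_rw [intervalIntegral.integral_of_le hcd, intervalIntegral.integral_of_le hab]
  apply MeasureTheory.integral_integral_swap
  rw [Measure.prod_restrict]
  have hsub : Set.Ioc a b ×ˢ Set.Ioc c d ⊆ Set.Icc a b ×ˢ Set.Icc c d :=
    Set.prod_mono Set.Ioc_subset_Icc_self Set.Ioc_subset_Icc_self
  have hint : IntegrableOn (Function.uncurry g) (Set.Icc a b ×ˢ Set.Icc c d)
      (volume.prod volume) := by
    exact (hg.continuousOn).integrableOn_compact (isCompact_Icc.prod isCompact_Icc)
  have h2 := hint.mono_set hsub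
  rwa [← Measure.volume_eq_prod] at h2

lemma aux_parseval {L : ℝ} [hL : Fact (0 < L)] (G : AddCircle L → ℂ) (hGc : Continuous G) :
    (∑' n : ℤ, ‖fourierCoeff G n‖ ^ 2
      = ∫ t : AddCircle L, ‖G t‖ ^ 2 ∂AddCircle.haarAddCircle)
    ∧ Summable fun n : ℤ => ‖fourierCoeff G n‖ ^ 2 := by
  have hcoeff : ∀ n : ℤ,
      fourierCoeff ((ContinuousMap.toLp (E := ℂ) 2 AddCircle.haarAddCircle ℂ
        ⟨G, hGc⟩ : Lp ℂ 2 AddCircle.haarAddCircle) : AddCircle L → ℂ) n = fourierCoeff G n :=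
    fun n => fourierCoeff_toLp ⟨G, hGc⟩ n
  constructor
  · have h1 := tsum_sq_fourierCoeff (ContinuousMap.toLp (E := ℂ) 2 AddCircle.haarAddCircle ℂ
      ⟨G, hGc⟩)
    have h2 : ∫ t : AddCircle L,
        ‖((ContinuousMap.toLp (E := ℂ) 2 AddCircle.haarAddCircle ℂ ⟨G, hGc⟩ :
          Lp ℂ 2 AddCircle.haarAddCircle) : AddCircle L → ℂ) t‖ ^ 2 ∂AddCircle.haarAddCircle
        = ∫ t : AddCircle L, ‖G t‖ ^ 2 ∂AddCircle.haarAddCircle := by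
      refine integral_congr_ae ?_
      filter_upwards [ContinuousMap.coeFn_toLp (p := 2) AddCircle.haarAddCircle (𝕜 := ℂ)
        ⟨G, hGc⟩] with t ht
      rw [ht]; rfl
    rw [← h2, ← h1]
    exact tsum_congr fun n => by rw [hcoeff]
  · have h3 := (lp.hasSum_norm (p := 2) (by norm_num)
      (fourierBasis.repr (ContinuousMap.toLp (E := ℂ) 2 AddCircle.haarAddCircle ℂ
        ⟨G, hGc⟩))).summable
    refine h3.congr fun n => ?_
    rw [fourierBasis_repr, hcoeff]
    rw [show ((2 : ENNReal).toReal) = ((2 : ℕ) : ℝ) by norm_num, Real.rpow_natCast]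



/-- If a closed curve `Γ` of length `L` (with curvature `γ`, bending angle `β`,
total bending `2π`) bends by at most `π/2` over every arc of length at most
`u`, then the mean-chord inequality `C_L^2(u)` holds:
`∫₀ᴸ |Γ(s+u) - Γ(s)|² ds ≤ (L³/π²) sin²(πu/L)`. -/
theorem mean_square_chord_ineq_of_small_bending
    (L : ℝ) (hL : 0 < L)
    (γ : ℝ → ℝ) (hloc : LocallyIntegrable γ)
    (hper : ∀ s, γ (s + L) = γ s)
    (htot : (∫ s in (0:ℝ)..L, γ s) = 2 * π)
    (β : ℝ → ℝ) (hβ : ∀ s, β s = ∫ t in (0:ℝ)..s, γ t)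
    (Γ : ℝ → EuclideanSpace ℝ (Fin 2))
    (hΓ : ∀ s, Γ s = (WithLp.equiv 2 (Fin 2 → ℝ)).symm
        ![∫ t in (0:ℝ)..s, Real.cos (β t), ∫ t in (0:ℝ)..s, Real.sin (β t)])
    (hclose₁ : (∫ t in (0:ℝ)..L, Real.cos (β t)) = 0)
    (hclose₂ : (∫ t in (0:ℝ)..L, Real.sin (β t)) = 0)
    (u : ℝ) (hu : u ∈ Set.Ioc 0 (L / 2))
    (hbend : ∀ z : ℝ, ∀ x ∈ Set.Ioc (0:ℝ) u,
        0 ≤ β (z + x / 2) - β (z - x / 2) ∧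
        β (z + x / 2) - β (z - x / 2) ≤ π / 2) :
    ∫ s in (0:ℝ)..L, ‖Γ (s + u) - Γ s‖ ^ 2 ≤
      L ^ 3 / π ^ 2 * Real.sin (π * u / L) ^ 2 := by
  haveI : Fact (0 < L) := ⟨hL⟩
  obtain ⟨hu0, huL⟩ := hu
  have hπ := Real.pi_pos
  clear hbend
  -- interval integrability of γ
  have hγint : ∀ a b : ℝ, IntervalIntegrable γ volume a b := fun a b =>
    (hloc.integrableOn_isCompact isCompact_uIcc).intervalIntegrable
  -- rewrite β
  have hβeq : β = fun s => ∫ t in (0:ℝ)..s, γ t := funext hβ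
  have hβc : Continuous β := by
    rw [hβeq]; exact intervalIntegral.continuous_primitive hγint 0
  have hγper : Function.Periodic γ L := hper
  have hβper : ∀ s, β (s + L) = β s + 2 * π := by
    intro s
    have h1 : ∫ t in (0:ℝ)..(s + L), γ t
        = (∫ t in (0:ℝ)..s, γ t) + ∫ t in s..(s + L), γ t :=
      (intervalIntegral.integral_add_adjacent_intervals (hγint 0 s) (hγint s (s + L))).symm
    have h2 : ∫ t in s..(s + L), γ t = ∫ t in (0:ℝ)..(0 + L), γ t :=
      hγper.intervalIntegral_add_eq s 0
    rw [hβeq]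
    simp only [h1, h2, zero_add, htot, hβ]
  -- the tangent indicatrix as a complex exponential
  set f : ℝ → ℂ := fun t => Complex.exp (β t * Complex.I) with hf
  have hfc : Continuous f := by
    exact Complex.continuous_exp.comp ((Complex.continuous_ofReal.comp hβc).mul continuous_const)
  have hfper : Function.Periodic f L := by
    intro t
    simp only [hf, hβper t]
    push_cast
    rw [add_mul, Complex.exp_add, Complex.exp_two_pi_mul_I, mul_one]
  have hfre : ∀ t, (f t).re = Real.cos (β t) := fun t => by
    simp [hf, Complex.exp_ofReal_mul_I_re]
  have hfim : ∀ t, (f t).im = Real.sin (β t) := fun t => by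
    simp [hf, Complex.exp_ofReal_mul_I_im]
  have hfnorm : ∀ t, ‖f t‖ = 1 := fun t => by
    simp [hf, Complex.norm_exp_ofReal_mul_I]
  have hfint : ∀ a b : ℝ, IntervalIntegrable f volume a b := fun a b =>
    hfc.intervalIntegrable a b
  -- the chord function
  set h : ℝ → ℂ := fun s => ∫ t in s..(s + u), f t with hh
  have hhsub : ∀ s, h s = (∫ t in (0:ℝ)..(s + u), f t) - ∫ t in (0:ℝ)..s, f t := fun s =>
    (intervalIntegral.integral_interval_sub_left (hfint 0 (s + u)) (hfint 0 s)).symm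
  have hhc : Continuous h := by
    have h1 : Continuous fun s : ℝ => ∫ t in (0:ℝ)..s, f t :=
      intervalIntegral.continuous_primitive hfint 0
    rw [show h = fun s => (∫ t in (0:ℝ)..(s + u), f t) - ∫ t in (0:ℝ)..s, f t from funext hhsub]
    exact (h1.comp (continuous_id.add continuous_const)).sub h1
  have hhper : Function.Periodic h L := by
    intro s
    simp only [hh]
    rw [show s + L + u = s + u + L by ring,
      ← intervalIntegral.integral_comp_add_right f L]
    exact intervalIntegral.integral_congr fun t _ => hfper t
  -- pointwise chord identity
  have hcosint : ∀ a b : ℝ, IntervalIntegrable (fun t => Real.cos (β t)) volume a b :=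
    fun a b => (Real.continuous_cos.comp hβc).intervalIntegrable a b
  have hsinint : ∀ a b : ℝ, IntervalIntegrable (fun t => Real.sin (β t)) volume a b :=
    fun a b => (Real.continuous_sin.comp hβc).intervalIntegrable a b
  have hre : ∀ s, (h s).re = ∫ t in s..(s + u), Real.cos (β t) := by
    intro s
    have h1 := Complex.reCLM.intervalIntegral_comp_comm (𝕜 := ℝ) (hfint s (s + u))
    simp only [hh]
    rw [show (∫ t in s..(s + u), f t).re = Complex.reCLM (∫ t in s..(s + u), f t) from rfl,
      ← h1]
    exact intervalIntegral.integral_congr fun t _ => hfre t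
  have him : ∀ s, (h s).im = ∫ t in s..(s + u), Real.sin (β t) := by
    intro s
    have h1 := Complex.imCLM.intervalIntegral_comp_comm (𝕜 := ℝ) (hfint s (s + u))
    simp only [hh]
    rw [show (∫ t in s..(s + u), f t).im = Complex.imCLM (∫ t in s..(s + u), f t) from rfl,
      ← h1]
    exact intervalIntegral.integral_congr fun t _ => hfim t
  have hchord : ∀ s : ℝ, ‖Γ (s + u) - Γ s‖ ^ 2 = ‖h s‖ ^ 2 := by
    intro s
    have e0 : (Γ (s + u) - Γ s) 0 = ∫ t in s..(s + u), Real.cos (β t) := by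
      have : (Γ (s + u) - Γ s) 0 = Γ (s + u) 0 - Γ s 0 := rfl
      rw [this, hΓ, hΓ]
      show (∫ t in (0:ℝ)..(s + u), Real.cos (β t)) - ∫ t in (0:ℝ)..s, Real.cos (β t)
          = ∫ t in s..(s + u), Real.cos (β t)
      exact intervalIntegral.integral_interval_sub_left (hcosint 0 (s + u)) (hcosint 0 s)
    have e1 : (Γ (s + u) - Γ s) 1 = ∫ t in s..(s + u), Real.sin (β t) := by
      have : (Γ (s + u) - Γ s) 1 = Γ (s + u) 1 - Γ s 1 := rfl
      rw [this, hΓ, hΓ]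
      show (∫ t in (0:ℝ)..(s + u), Real.sin (β t)) - ∫ t in (0:ℝ)..s, Real.sin (β t)
          = ∫ t in s..(s + u), Real.sin (β t)
      exact intervalIntegral.integral_interval_sub_left (hsinint 0 (s + u)) (hsinint 0 s)
    have hnorm2 : ‖Γ (s + u) - Γ s‖ ^ 2
        = ((Γ (s + u) - Γ s) 0) ^ 2 + ((Γ (s + u) - Γ s) 1) ^ 2 := by
      rw [EuclideanSpace.norm_eq, Real.sq_sqrt (by positivity)]
      simp [Fin.sum_univ_two, sq_abs]
    have hnormh : ‖h s‖ ^ 2 = (h s).re ^ 2 + (h s).im ^ 2 := by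
      rw [Complex.sq_norm, Complex.normSq_apply]; ring
    rw [hnorm2, hnormh, e0, e1, hre, him]
  -- lift f and h to the circle
  set F : AddCircle L → ℂ := AddCircle.liftIco L 0 f with hFdef
  set H : AddCircle L → ℂ := AddCircle.liftIco L 0 h with hHdef
  have hFcoe : ∀ x : ℝ, F ↑x = f x := fun x => aux_liftIco_coe hL hfper x
  have hHcoe : ∀ x : ℝ, H ↑x = h x := fun x => aux_liftIco_coe hL hhper x
  have hFc : Continuous F :=
    AddCircle.liftIco_continuous (by simpa using (hfper 0).symm)
      ((hfc.continuousOn) : ContinuousOn f (Set.Icc 0 (0 + L)))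
  have hHc : Continuous H :=
    AddCircle.liftIco_continuous (by simpa using (hhper 0).symm)
      ((hhc.continuousOn) : ContinuousOn h (Set.Icc 0 (0 + L)))
  have hFnorm : ∀ x : AddCircle L, ‖F x‖ = 1 := by
    intro x
    induction x using QuotientAddGroup.induction_on with
    | H y => rw [hFcoe y]; exact hfnorm y
  -- the zeroth Fourier coefficient of F vanishes
  have hF0 : fourierCoeff F 0 = 0 := by
    rw [fourierCoeff_eq_intervalIntegral F 0 0, zero_add]
    have e1 : ∫ x in (0:ℝ)..L, fourier (-0) (x : AddCircle L) • F ↑x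
        = ∫ x in (0:ℝ)..L, f x := by
      refine intervalIntegral.integral_congr fun x _ => ?_
      rw [neg_zero, fourier_zero, hFcoe, one_smul]
    have e2 : ∀ t : ℝ, f t = (Real.cos (β t) : ℂ) + (Real.sin (β t) : ℂ) * Complex.I := by
      intro t
      simp only [hf]
      rw [Complex.exp_mul_I, Complex.ofReal_cos, Complex.ofReal_sin]
    have e3 : ∫ x in (0:ℝ)..L, f x = 0 := by
      rw [intervalIntegral.integral_congr fun x _ => e2 x]
      have c1 : IntervalIntegrable (fun t : ℝ => ((Real.cos (β t) : ℂ))) volume 0 L := by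
        apply Continuous.intervalIntegrable; fun_prop
      have c2 : IntervalIntegrable (fun t : ℝ => ((Real.sin (β t) : ℂ)) * Complex.I)
          volume 0 L := by
        apply Continuous.intervalIntegrable; fun_prop
      rw [intervalIntegral.integral_add c1 c2,
        intervalIntegral.integral_mul_const, intervalIntegral.integral_ofReal,
        intervalIntegral.integral_ofReal, hclose₁, hclose₂]
      simp
    rw [e1, e3, smul_zero]
  have hLne : (L : ℂ) ≠ 0 := Complex.ofReal_ne_zero.2 hL.ne'
  -- multiplicativity of characters
  have hfouriermul : ∀ (m : ℤ) (x y : AddCircle L),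
      fourier m (x + y) = fourier m x * fourier m y := by
    intro m x y
    rw [fourier_apply, fourier_apply, fourier_apply, smul_add, AddCircle.toCircle_add]
    rfl
  have hfourierinv : ∀ (m : ℤ) (x : AddCircle L), fourier m x * fourier (-m) x = 1 := by
    intro m x
    rw [← fourier_add]
    simp [fourier_zero]
  -- the key identity relating the coefficients of H and F
  have key : ∀ n : ℤ, fourierCoeff H n
      = fourierCoeff F n * ∫ v in (0:ℝ)..u, (fourier n (v : AddCircle L) : ℂ) := by
    intro n
    have hshift : ∀ s : ℝ, (∫ v in (0:ℝ)..u, f (s + v)) = h s := by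
      intro s
      rw [intervalIntegral.integral_comp_add_left f s, add_zero]
    rw [fourierCoeff_eq_intervalIntegral H n 0, zero_add]
    have step1 : ∫ x in (0:ℝ)..L, fourier (-n) (x : AddCircle L) • H ↑x
        = ∫ s in (0:ℝ)..L, ∫ v in (0:ℝ)..u,
            (fourier (-n) (s : AddCircle L) : ℂ) * f (s + v) := by
      refine intervalIntegral.integral_congr fun s _ => ?_
      rw [smul_eq_mul, hHcoe, ← hshift s, ← intervalIntegral.integral_const_mul]
    have hgc : Continuous fun p : ℝ × ℝ =>
        (fourier (-n) ((p.1 : ℝ) : AddCircle L) : ℂ) * f (p.1 + p.2) := by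
      apply Continuous.mul
      · exact (map_continuous (fourier (-n))).comp
          ((AddCircle.continuous_mk' L).comp continuous_fst)
      · exact hfc.comp (continuous_fst.add continuous_snd)
    have step2 := aux_intervalIntegral_swap (g := fun s v =>
      (fourier (-n) ((s : ℝ) : AddCircle L) : ℂ) * f (s + v)) hL.le hu0.le hgc
    have inner : ∀ v : ℝ, (∫ s in (0:ℝ)..L, (fourier (-n) (s : AddCircle L) : ℂ) * f (s + v))
        = fourier n (v : AddCircle L) * (L * fourierCoeff F n) := by
      intro v
      have e1 : ∀ s : ℝ, (fourier (-n) ((s : ℝ) : AddCircle L) : ℂ) * f (s + v)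
          = fourier n (v : AddCircle L) *
            ((fourier (-n) (((s + v : ℝ)) : AddCircle L) : ℂ) * f (s + v)) := by
        intro s
        have hsplit : ((s + v : ℝ) : AddCircle L)
            = ((s : ℝ) : AddCircle L) + ((v : ℝ) : AddCircle L) := rfl
        rw [hsplit, hfouriermul (-n)]
        rw [show (fourier n ((v:ℝ) : AddCircle L) : ℂ) *
            ((fourier (-n) ((s:ℝ) : AddCircle L) : ℂ) * (fourier (-n) ((v:ℝ) : AddCircle L))
              * f (s + v))
            = ((fourier n ((v:ℝ) : AddCircle L) : ℂ) * (fourier (-n) ((v:ℝ) : AddCircle L))) *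
              ((fourier (-n) ((s:ℝ) : AddCircle L) : ℂ) * f (s + v)) by ring,
          hfourierinv, one_mul]
      rw [intervalIntegral.integral_congr fun s _ => e1 s,
        intervalIntegral.integral_const_mul]
      congr 1
      have e2 : (∫ s in (0:ℝ)..L, (fourier (-n) (((s + v : ℝ)) : AddCircle L) : ℂ) * f (s + v))
          = ∫ x in v..(v + L), (fourier (-n) ((x : ℝ) : AddCircle L) : ℂ) * f x := by
        have e2' := intervalIntegral.integral_comp_add_right (a := (0:ℝ)) (b := L)
          (fun x : ℝ => (fourier (-n) ((x : ℝ) : AddCircle L) : ℂ) * f x) v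
        rw [e2', zero_add, add_comm L v]
      rw [e2, fourierCoeff_eq_intervalIntegral F n v]
      have e3 : ∫ x in v..(v + L), fourier (-n) (x : AddCircle L) • F ↑x
          = ∫ x in v..(v + L), (fourier (-n) (x : AddCircle L) : ℂ) * f x :=
        intervalIntegral.integral_congr fun x _ => by rw [smul_eq_mul, hFcoe]
      rw [e3, Complex.real_smul]
      push_cast
      rw [← mul_assoc, show (L : ℂ) * ((1 : ℂ) / L) = 1 by field_simp, one_mul]
    rw [step1, step2,
      intervalIntegral.integral_congr fun v _ => inner v,
      intervalIntegral.integral_mul_const, Complex.real_smul]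
    push_cast
    field_simp
  have parseval := fun (G : AddCircle L → ℂ) (hGc : Continuous G) => aux_parseval G hGc
  have hPF1 : ∑' n : ℤ, ‖fourierCoeff F n‖ ^ 2 = 1 := by
    rw [(parseval F hFc).1]
    have hone : ∀ t : AddCircle L, ‖F t‖ ^ 2 = 1 := fun t => by rw [hFnorm t]; norm_num
    rw [integral_congr_ae (Filter.Eventually.of_forall hone)]
    simp
  have hSF := (parseval F hFc).2
  have hPH := (parseval H hHc).1
  have hSH := (parseval H hHc).2
  -- the multiplier bound
  set C : ℝ := L ^ 2 / π ^ 2 * Real.sin (π * u / L) ^ 2 with hCdef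
  have hC0 : 0 ≤ C := by positivity
  have hEbound : ∀ n : ℤ, n ≠ 0 →
      ‖∫ v in (0:ℝ)..u, (fourier n (v : AddCircle L) : ℂ)‖ ^ 2 ≤ C := by
    intro n hn
    have hnR : ((n : ℝ)) ≠ 0 := Int.cast_ne_zero.2 hn
    set c : ℂ := 2 * π * Complex.I * n / L with hcdef
    have hcne : c ≠ 0 := by
      rw [hcdef]
      apply div_ne_zero _ hLne
      apply mul_ne_zero
      apply mul_ne_zero
      · norm_num [Real.pi_ne_zero]
      · exact Complex.I_ne_zero
      · exact_mod_cast (Int.cast_ne_zero (α := ℂ)).2 hn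
    have hEeq : (∫ v in (0:ℝ)..u, (fourier n (v : AddCircle L) : ℂ))
        = (Complex.exp (c * u) - 1) / c := by
      have e1 : ∀ v : ℝ, (fourier n (v : AddCircle L) : ℂ) = Complex.exp (c * v) := by
        intro v
        rw [fourier_coe_apply]
        congr 1
        rw [hcdef]; push_cast; ring
      rw [intervalIntegral.integral_congr fun v _ => e1 v, integral_exp_mul_complex hcne,
        Complex.ofReal_zero, mul_zero, Complex.exp_zero]
    have hcu : c * u = ((2 * π * n * u / L : ℝ) : ℂ) * Complex.I := by
      rw [hcdef]; push_cast; ring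
    have hnormc : ‖c‖ = 2 * π * |(n : ℝ)| / L := by
      have e2 : c = ((2 * π * n / L : ℝ) : ℂ) * Complex.I := by
        rw [hcdef]; push_cast; ring
      rw [e2, norm_mul, Complex.norm_I, mul_one, Complex.norm_real, Real.norm_eq_abs]
      rw [abs_div, abs_mul, abs_of_pos (by positivity : (0:ℝ) < 2 * π), abs_of_pos hL]
    rw [hEeq, norm_div, div_pow, hcu, aux_norm_exp_sub_one_sq, hnormc]
    have harg : 2 * π * (n : ℝ) * u / L / 2 = (n : ℝ) * (π * u / L) := by ring
    rw [harg]
    have hsin2 : Real.sin ((n : ℝ) * (π * u / L)) ^ 2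
        ≤ (n : ℝ) ^ 2 * Real.sin (π * u / L) ^ 2 := by
      have hb := aux_abs_sin_int_mul_le n (π * u / L)
      calc Real.sin ((n : ℝ) * (π * u / L)) ^ 2
          = |Real.sin ((n : ℝ) * (π * u / L))| ^ 2 := (sq_abs _).symm
        _ ≤ (|(n : ℝ)| * |Real.sin (π * u / L)|) ^ 2 :=
            pow_le_pow_left₀ (abs_nonneg _) hb 2
        _ = (n : ℝ) ^ 2 * Real.sin (π * u / L) ^ 2 := by
            rw [mul_pow, sq_abs, sq_abs]
    rw [div_le_iff₀ (by positivity : (0:ℝ) < (2 * π * |(n : ℝ)| / L) ^ 2)]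
    have hexp : C * (2 * π * |(n : ℝ)| / L) ^ 2
        = 4 * (n : ℝ) ^ 2 * Real.sin (π * u / L) ^ 2 := by
      rw [hCdef, show (2 * π * |(n : ℝ)| / L) ^ 2 = 2 ^ 2 * π ^ 2 * (n : ℝ) ^ 2 / L ^ 2 from by
        rw [div_pow, mul_pow, mul_pow, sq_abs]]
      field_simp
      ring
    rw [hexp]
    nlinarith [hsin2]
  -- termwise bound
  have hterm : ∀ n : ℤ, ‖fourierCoeff H n‖ ^ 2 ≤ C * ‖fourierCoeff F n‖ ^ 2 := by
    intro n
    rcases eq_or_ne n 0 with rfl | hn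
    · rw [key 0, hF0, zero_mul]
      simp
    · rw [key n, norm_mul, mul_pow]
      calc ‖fourierCoeff F n‖ ^ 2 * ‖∫ v in (0:ℝ)..u, (fourier n (v : AddCircle L) : ℂ)‖ ^ 2
          ≤ ‖fourierCoeff F n‖ ^ 2 * C :=
            mul_le_mul_of_nonneg_left (hEbound n hn) (by positivity)
        _ = C * ‖fourierCoeff F n‖ ^ 2 := mul_comm _ _
  have hsum : ∫ t : AddCircle L, ‖H t‖ ^ 2 ∂AddCircle.haarAddCircle ≤ C := by
    rw [← hPH]
    calc ∑' n : ℤ, ‖fourierCoeff H n‖ ^ 2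
        ≤ ∑' n : ℤ, C * ‖fourierCoeff F n‖ ^ 2 :=
          Summable.tsum_le_tsum hterm hSH (hSF.mul_left C)
      _ = C * ∑' n : ℤ, ‖fourierCoeff F n‖ ^ 2 := tsum_mul_left
      _ = C := by rw [hPF1, mul_one]
  -- convert the left-hand side
  have conv1 : ∫ s in (0:ℝ)..L, ‖Γ (s + u) - Γ s‖ ^ 2 = ∫ s in (0:ℝ)..L, ‖h s‖ ^ 2 :=
    intervalIntegral.integral_congr fun s _ => hchord s
  have conv2 : ∫ s in (0:ℝ)..L, ‖h s‖ ^ 2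
      = L * ∫ t : AddCircle L, ‖H t‖ ^ 2 ∂AddCircle.haarAddCircle := by
    have e1 : ∫ s in (0:ℝ)..(0 + L), (fun t : AddCircle L => ‖H t‖ ^ 2) ↑s
        = ∫ t : AddCircle L, ‖H t‖ ^ 2 :=
      AddCircle.intervalIntegral_preimage L 0 (fun t : AddCircle L => ‖H t‖ ^ 2)
    rw [zero_add] at e1
    have e0 : ∫ s in (0:ℝ)..L, ‖h s‖ ^ 2 = ∫ s in (0:ℝ)..L, ‖H ↑s‖ ^ 2 :=
      intervalIntegral.integral_congr fun s _ => by rw [hHcoe]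
    rw [e0, e1, AddCircle.volume_eq_smul_haarAddCircle, integral_smul_measure,
      ENNReal.toReal_ofReal hL.le, smul_eq_mul]
  rw [conv1, conv2]
  have final : L * C = L ^ 3 / π ^ 2 * Real.sin (π * u / L) ^ 2 := by
    rw [hCdef]; field_simp
  calc L * ∫ t : AddCircle L, ‖H t‖ ^ 2 ∂AddCircle.haarAddCircle
      ≤ L * C := mul_le_mul_of_nonneg_left hsum hL.le
    _ = L ^ 3 / π ^ 2 * Real.sin (π * u / L) ^ 2 := final
end

section
/- Under the hypotheses that L > 0, γ : ℝ → ℝ is a locally integrable L-periodic function with ∫₀^L γ(s) ds = 2π, β(s) := ∫₀^s γ(s') ds', Γ(s) := (∫₀^s cos β(s') ds', ∫₀^s sin β(s') ds'), ∫₀^L cos β(s') ds' = ∫₀^L sin β(s') ds' = 0, u ∈ (0, L/2], and 0 ≤ β(z + x/2) − β(z − x/2) ≤ π/2 for all z ∈ ℝ and x ∈ (0, u]: if γ is not almost everywhere equal to the constant 2π/L, then the strict inequality ∫₀^L |Γ(s+u) − Γ(s)|² ds < (L³/π²)·sin²(πu/L) holds. -/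
open MeasureTheory Real Set intervalIntegral

section AUX

/-- Strict tangent-line inequality for `cos` on `[0, π/2]`. -/
lemma cos_lt_tangent {m t : ℝ} (hm : m ∈ Set.Icc 0 (π/2)) (ht : t ∈ Set.Icc 0 (π/2))
    (hne : t ≠ m) : Real.cos t < Real.cos m - Real.sin m * (t - m) := by
  obtain ⟨hm0, hm1⟩ := hm
  obtain ⟨ht0, ht1⟩ := ht
  have hheart : ∀ a b : ℝ, 0 ≤ a → b ≤ π/2 → a < b →
      Real.cos b < Real.cos a - Real.sin a * (b - a) ∧
      Real.cos a < Real.cos b - Real.sin b * (a - b) := by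
    intro a b ha0 hb1 hab
    obtain ⟨z, hz, hz'⟩ := exists_hasDerivAt_eq_slope Real.cos (fun x => -Real.sin x) hab
      Real.continuous_cos.continuousOn (fun x _ => Real.hasDerivAt_cos x)
    have hsz : Real.sin z < Real.sin b := by
      apply Real.strictMonoOn_sin ⟨by nlinarith [Real.pi_pos, hz.1], by linarith [hz.2]⟩
        ⟨by nlinarith [Real.pi_pos], hb1⟩ hz.2
    have hsz' : Real.sin a < Real.sin z := by
      apply Real.strictMonoOn_sin ⟨by nlinarith [Real.pi_pos], by linarith [hz.1, hz.2]⟩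
        ⟨by nlinarith [Real.pi_pos, hz.1], by linarith [hz.2]⟩ hz.1
    have hba : 0 < b - a := by linarith
    have : Real.cos b - Real.cos a = -Real.sin z * (b - a) := by
      field_simp at hz'
      linarith [hz']
    constructor <;> nlinarith
  rcases lt_or_gt_of_ne hne with h | h
  · exact (hheart t m ht0 hm1 h).2
  · exact (hheart m t hm0 ht1 h).1

lemma cos_le_tangent {m t : ℝ} (hm : m ∈ Set.Icc 0 (π/2)) (ht : t ∈ Set.Icc 0 (π/2)) :
    Real.cos t ≤ Real.cos m - Real.sin m * (t - m) := by
  rcases eq_or_ne t m with rfl | h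
  · simp
  · exact (cos_lt_tangent hm ht h).le

/-- Fubini for iterated interval integrals of a continuous function. -/
lemma intervalIntegral_swap_of_continuous {F : ℝ → ℝ → ℝ}
    (hF : Continuous (Function.uncurry F)) {p q r t : ℝ} (hpq : p ≤ q) (hrt : r ≤ t) :
    ∫ x in p..q, ∫ y in r..t, F x y = ∫ y in r..t, ∫ x in p..q, F x y := by
  have hint : Integrable (Function.uncurry F)
      ((volume.restrict (Set.Ioc p q)).prod (volume.restrict (Set.Ioc r t))) := by
    rw [Measure.prod_restrict]
    have : IntegrableOn (Function.uncurry F) (Set.Icc p q ×ˢ Set.Icc r t)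
        (volume.prod volume) :=
      hF.continuousOn.integrableOn_compact (isCompact_Icc.prod isCompact_Icc)
    exact this.mono_set (Set.prod_mono Set.Ioc_subset_Icc_self Set.Ioc_subset_Icc_self)
  have := MeasureTheory.integral_integral_swap hint
  simpa [intervalIntegral.integral_of_le hpq, intervalIntegral.integral_of_le hrt] using this

/-- Integral of a periodic function over a period is shift invariant. -/
lemma periodic_shift_intervalIntegral {f : ℝ → ℝ} {T : ℝ} (hf : Function.Periodic f T)
    (x : ℝ) : ∫ s in (0:ℝ)..T, f (s + x) = ∫ s in (0:ℝ)..T, f s := by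
  rw [intervalIntegral.integral_comp_add_right]
  have := hf.intervalIntegral_add_eq x 0
  simpa [add_comm] using this

end AUX

/-- Under the hypotheses of the small-bending mean-chord inequality, if the
curvature `γ` is not a.e. equal to the constant `2π/L` (i.e. the curve is not
a circle), then the inequality `C_L^2(u)` is strict. -/
theorem mean_square_chord_strict_ineq_of_small_bending
    (L : ℝ) (hL : 0 < L)
    (γ : ℝ → ℝ) (hloc : LocallyIntegrable γ)
    (hper : ∀ s, γ (s + L) = γ s)
    (htot : (∫ s in (0:ℝ)..L, γ s) = 2 * π)
    (β : ℝ → ℝ) (hβ : ∀ s, β s = ∫ t in (0:ℝ)..s, γ t)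
    (Γ : ℝ → EuclideanSpace ℝ (Fin 2))
    (hΓ : ∀ s, Γ s = (WithLp.equiv 2 (Fin 2 → ℝ)).symm
        ![∫ t in (0:ℝ)..s, Real.cos (β t), ∫ t in (0:ℝ)..s, Real.sin (β t)])
    (hclose₁ : (∫ t in (0:ℝ)..L, Real.cos (β t)) = 0)
    (hclose₂ : (∫ t in (0:ℝ)..L, Real.sin (β t)) = 0)
    (u : ℝ) (hu : u ∈ Set.Ioc 0 (L / 2))
    (hbend : ∀ z : ℝ, ∀ x ∈ Set.Ioc (0:ℝ) u,
        0 ≤ β (z + x / 2) - β (z - x / 2) ∧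
        β (z + x / 2) - β (z - x / 2) ≤ π / 2)
    (hnotcirc : ¬ (γ =ᵐ[volume] fun _ => 2 * π / L)) :
    ∫ s in (0:ℝ)..L, ‖Γ (s + u) - Γ s‖ ^ 2 <
      L ^ 3 / π ^ 2 * Real.sin (π * u / L) ^ 2 := by
  obtain ⟨hu0, huL⟩ := hu
  have hLne : L ≠ 0 := ne_of_gt hL
  have hπ : (0:ℝ) < π := Real.pi_pos
  set c : ℝ := 2 * π / L with hc
  have hc0 : 0 < c := by positivity
  -- basic facts about β
  have hγint : ∀ a b : ℝ, IntervalIntegrable γ volume a b := fun a b =>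
    (hloc.integrableOn_isCompact isCompact_uIcc).intervalIntegrable
  have hβcont : Continuous β := by
    have : Continuous fun s => ∫ t in (0:ℝ)..s, γ t :=
      intervalIntegral.continuous_primitive hγint 0
    simpa [funext hβ] using this
  have hβ0 : β 0 = 0 := by rw [hβ]; simp
  have hβx : ∀ a b : ℝ, β b - β a = ∫ t in a..b, γ t := by
    intro a b
    rw [hβ a, hβ b, ← intervalIntegral.integral_add_adjacent_intervals (hγint 0 a) (hγint a b)]
    ring
  have hβL : ∀ s, β (s + L) = β s + 2 * π := by
    intro s
    have h1 : β (s + L) - β s = ∫ t in s..s+L, γ t := hβx s (s + L)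
    have h2 : (∫ t in s..s+L, γ t) = ∫ t in (0:ℝ)..0+L, γ t :=
      (Function.Periodic.intervalIntegral_add_eq hper s 0)
    rw [zero_add, htot] at h2
    linarith [h1, h2.symm ▸ h1]
  -- the difference function and its properties
  set Δ : ℝ → ℝ → ℝ := fun x s => β (s + x) - β s with hΔ
  have hΔper : ∀ x, Function.Periodic (Δ x) L := by
    intro x s
    simp only [hΔ]
    rw [show s + L + x = (s + x) + L by ring, hβL, hβL]
    ring
  have hΔmem : ∀ x ∈ Set.Ioc (0:ℝ) u, ∀ s, Δ x s ∈ Set.Icc 0 (π/2) := by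
    intro x hx s
    have := hbend (s + x/2) x hx
    have e1 : s + x/2 + x/2 = s + x := by ring
    have e2 : s + x/2 - x/2 = s := by ring
    rw [e1, e2] at this
    exact ⟨this.1, this.2⟩
  have hΔcont : ∀ x, Continuous (Δ x) := fun x =>
    (hβcont.comp (continuous_id.add continuous_const)).sub hβcont
  have hβint : ∀ a b : ℝ, IntervalIntegrable β volume a b := fun a b =>
    hβcont.intervalIntegrable a b
  -- mean value of Δ x over a period
  have hΔint : ∀ x : ℝ, (∫ s in (0:ℝ)..L, Δ x s) = 2 * π * x := by
    intro x
    have h1 : (∫ s in (0:ℝ)..L, Δ x s)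
        = (∫ s in (0:ℝ)..L, β (s + x)) - ∫ s in (0:ℝ)..L, β s := by
      simp only [hΔ]
      exact intervalIntegral.integral_sub
        ((hβcont.comp (continuous_id.add continuous_const)).intervalIntegrable 0 L)
        (hβint 0 L)
    have h2 : (∫ s in (0:ℝ)..L, β (s + x)) = ∫ s in x..L+x, β s := by
      rw [intervalIntegral.integral_comp_add_right]; norm_num
    have h3 : (∫ s in x..L+x, β s) = (∫ s in x..L, β s) + ∫ s in L..L+x, β s :=
      (intervalIntegral.integral_add_adjacent_intervals (hβint x L) (hβint L (L+x))).symm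
    have h4 : (∫ s in (0:ℝ)..L, β s) = (∫ s in (0:ℝ)..x, β s) + ∫ s in x..L, β s :=
      (intervalIntegral.integral_add_adjacent_intervals (hβint 0 x) (hβint x L)).symm
    have h5 : (∫ s in L..L+x, β s) = ∫ s in (0:ℝ)..x, β (s + L) := by
      rw [intervalIntegral.integral_comp_add_right]; norm_num [add_comm]
    have h6 : (∫ s in (0:ℝ)..x, β (s + L)) = ∫ s in (0:ℝ)..x, (β s + 2 * π) := by
      apply intervalIntegral.integral_congr
      intro t _
      exact hβL t
    have h7 : (∫ s in (0:ℝ)..x, (β s + 2 * π)) = (∫ s in (0:ℝ)..x, β s) + 2 * π * x := by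
      rw [intervalIntegral.integral_add (hβint 0 x) (intervalIntegrable_const)]
      simp
      ring
    rw [h1, h2, h3, h4, h5, h6, h7]
    ring
  -- the autocorrelation function
  set h : ℝ → ℝ := fun x => ∫ s in (0:ℝ)..L, Real.cos (Δ x s) with hh
  have hhcont : Continuous h := by
    apply intervalIntegral.continuous_parametric_intervalIntegral_of_continuous'
    exact Real.continuous_cos.comp
      ((hβcont.comp (continuous_snd.add continuous_fst)).sub (hβcont.comp continuous_snd))
  have hheven : ∀ x, h (-x) = h x := by
    intro x
    have hper' : Function.Periodic (fun s => Real.cos (Δ (-x) s)) L :=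
      (hΔper (-x)).comp Real.cos
    have e : ∀ s, Real.cos (Δ (-x) (s + x)) = Real.cos (Δ x s) := by
      intro s
      simp only [hΔ]
      rw [show s + x + -x = s by ring, ← Real.cos_neg]
      ring_nf
    symm
    calc h x = ∫ s in (0:ℝ)..L, Real.cos (Δ (-x) (s + x)) := by
          simp only [hh]
          exact (intervalIntegral.integral_congr (fun s _ => (e s).symm))
      _ = ∫ s in (0:ℝ)..L, Real.cos (Δ (-x) s) := periodic_shift_intervalIntegral hper' x
      _ = h (-x) := rfl
  -- mean bending angle is at most π/2
  have hmbound : ∀ x ∈ Set.Ioc (0:ℝ) u, c * x ≤ π / 2 := by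
    intro x hx
    have hmono : (∫ s in (0:ℝ)..L, Δ x s) ≤ ∫ s in (0:ℝ)..L, (π/2 : ℝ) := by
      apply intervalIntegral.integral_mono_on hL.le
        ((hΔcont x).intervalIntegrable 0 L) intervalIntegrable_const
      intro s _
      exact (hΔmem x hx s).2
    rw [hΔint x, intervalIntegral.integral_const, smul_eq_mul, sub_zero] at hmono
    rw [hc]
    rw [div_mul_eq_mul_div, div_le_iff₀ hL]
    nlinarith
  -- Jensen-type bound with strictness
  have hkey : ∀ x ∈ Set.Ioc (0:ℝ) u,
      h x ≤ L * Real.cos (c * x) ∧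
      ((∃ s₀ ∈ Set.Icc (0:ℝ) L, Δ x s₀ ≠ c * x) → h x < L * Real.cos (c * x)) := by
    intro x hx
    set m : ℝ := c * x with hm
    have hmmem : m ∈ Set.Icc (0:ℝ) (π/2) :=
      ⟨(mul_pos hc0 hx.1).le, hmbound x hx⟩
    have hmL : m * L = 2 * π * x := by rw [hm, hc]; field_simp
    set g : ℝ → ℝ := fun s => Real.cos m - Real.sin m * (Δ x s - m) with hg
    have hgcont : Continuous g := by
      exact continuous_const.sub (continuous_const.mul ((hΔcont x).sub continuous_const))
    have hgint : (∫ s in (0:ℝ)..L, g s) = L * Real.cos m := by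
      have e1 : (∫ s in (0:ℝ)..L, g s)
          = (∫ s in (0:ℝ)..L, (Real.cos m + Real.sin m * m : ℝ))
            - ∫ s in (0:ℝ)..L, Real.sin m * Δ x s := by
        rw [← intervalIntegral.integral_sub intervalIntegrable_const
          (((hΔcont x).intervalIntegrable 0 L).const_mul _)]
        apply intervalIntegral.integral_congr
        intro s _
        simp only [hg]; ring
      rw [e1, intervalIntegral.integral_const_mul, hΔint x,
        intervalIntegral.integral_const, smul_eq_mul, sub_zero]
      linear_combination Real.sin m * hmL
    constructor
    · have : (∫ s in (0:ℝ)..L, Real.cos (Δ x s)) ≤ ∫ s in (0:ℝ)..L, g s := by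
        apply intervalIntegral.integral_mono_on hL.le
          ((Real.continuous_cos.comp (hΔcont x)).intervalIntegrable 0 L)
          (hgcont.intervalIntegrable 0 L)
        intro s _
        exact cos_le_tangent hmmem (hΔmem x hx s)
      rw [hgint] at this
      exact this
    · rintro ⟨s₀, hs₀, hne⟩
      have : (∫ s in (0:ℝ)..L, Real.cos (Δ x s)) < ∫ s in (0:ℝ)..L, g s := by
        apply intervalIntegral.integral_lt_integral_of_continuousOn_of_le_of_exists_lt hL
          (Real.continuous_cos.comp (hΔcont x)).continuousOn hgcont.continuousOn
        · intro s _
          exact cos_le_tangent hmmem (hΔmem x hx s)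
        · exact ⟨s₀, hs₀, cos_lt_tangent hmmem (hΔmem x hx s₀) hne⟩
      rw [hgint] at this
      exact this
  -- existence of a strict point
  have hexists : ∃ x₀ ∈ Set.Ioc (0:ℝ) u, h x₀ < L * Real.cos (c * x₀) := by
    by_contra hcon
    push_neg at hcon
    have hall : ∀ x ∈ Set.Ioc (0:ℝ) u, ∀ s, Δ x s = c * x := by
      intro x hx s
      obtain ⟨y, hy, hyeq⟩ := (hΔper x).exists_mem_Ico₀ hL s
      by_contra hne
      have hwit : ∃ s₀ ∈ Set.Icc (0:ℝ) L, Δ x s₀ ≠ c * x :=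
        ⟨y, ⟨hy.1, hy.2.le⟩, fun hcontr => hne (hyeq ▸ hcontr)⟩
      exact absurd ((hkey x hx).2 hwit) (not_lt.2 (hcon x hx))
    have hlin : ∀ t, β t = c * t := by
      have hstep : ∀ s : ℝ, ∀ x ∈ Set.Ioc (0:ℝ) u, β (s + x) = β s + c * x := by
        intro s x hx
        have := hall x hx s
        simp only [hΔ] at this
        linarith
      set D : ℝ → ℝ := fun t => β t - c * t with hD
      have hDper : Function.Periodic D u := by
        intro t
        simp only [hD]
        rw [hstep t u ⟨hu0, le_refl u⟩]
        ring
      have hDzero : ∀ y ∈ Set.Ico (0:ℝ) u, D y = 0 := by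
        intro y hy
        rcases eq_or_lt_of_le hy.1 with h0 | h0
        · simp [hD, ← h0, hβ0]
        · have := hstep 0 y ⟨h0, hy.2.le⟩
          rw [zero_add] at this
          simp only [hD]
          rw [this, hβ0]
          ring
      intro t
      obtain ⟨y, hy, hyeq⟩ := hDper.exists_mem_Ico₀ hu0 t
      have hDt : D t = 0 := hyeq ▸ hDzero y hy
      simp only [hD] at hDt
      linarith
    apply hnotcirc
    have hIcc : ∀ x y : ℝ, x < y → ⨍ t in Set.Icc x y, γ t = c := by
      intro x y hxy
      have hvol : (volume (Set.Icc x y)).toReal = y - x := by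
        rw [Real.volume_Icc]
        exact ENNReal.toReal_ofReal (by linarith)
      have hint : (∫ t in Set.Icc x y, γ t) = c * (y - x) := by
        rw [MeasureTheory.integral_Icc_eq_integral_Ioc,
          ← intervalIntegral.integral_of_le hxy.le]
        have hx' := hβx x y
        rw [hlin, hlin] at hx'
        rw [← hx']
        ring
      rw [setAverage_eq, hint, measureReal_def, hvol, smul_eq_mul]
      rw [inv_mul_eq_div]
      exact mul_div_cancel_right₀ c (sub_ne_zero.mpr hxy.ne')
    have hae := (IsUnifLocDoublingMeasure.vitaliFamily (volume : Measure ℝ) 1).ae_tendsto_average hloc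
    filter_upwards [hae] with x hx
    have htend : Filter.Tendsto (fun y => ⨍ t in Set.Icc x y, γ t)
        (nhdsWithin x (Set.Ioi x)) (nhds (γ x)) :=
      hx.comp (Real.tendsto_Icc_vitaliFamily_right x)
    have hconst : Filter.Tendsto (fun y => ⨍ t in Set.Icc x y, γ t)
        (nhdsWithin x (Set.Ioi x)) (nhds c) := by
      apply Filter.Tendsto.congr' _ tendsto_const_nhds
      filter_upwards [self_mem_nhdsWithin] with y hy
      exact (hIcc x y hy).symm
    exact tendsto_nhds_unique htend hconst
  obtain ⟨x₀, hx₀, hx₀strict⟩ := hexists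
  -- continuity helpers
  have hcβcont : Continuous fun t => Real.cos (β t) := Real.continuous_cos.comp hβcont
  have hsβcont : Continuous fun t => Real.sin (β t) := Real.continuous_sin.comp hβcont
  have hcsb : ∀ s : ℝ, Continuous fun b => Real.cos (β (s + b)) := fun s =>
    Real.continuous_cos.comp (hβcont.comp (continuous_const.add continuous_id))
  have hssb : ∀ s : ℝ, Continuous fun b => Real.sin (β (s + b)) := fun s =>
    Real.continuous_sin.comp (hβcont.comp (continuous_const.add continuous_id))
  have hccdiff : Continuous fun p : (ℝ × ℝ) × ℝ => Real.cos (β (p.1.1 + p.1.2) - β (p.1.1 + p.2)) :=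
    Real.continuous_cos.comp
      ((hβcont.comp ((continuous_fst.comp continuous_fst).add
        (continuous_snd.comp continuous_fst))).sub
       (hβcont.comp ((continuous_fst.comp continuous_fst).add continuous_snd)))
  -- the chord length squared
  have hnorm : ∀ s, ‖Γ (s + u) - Γ s‖ ^ 2
      = (∫ t in s..s+u, Real.cos (β t)) ^ 2 + (∫ t in s..s+u, Real.sin (β t)) ^ 2 := by
    intro s
    have h0 : (Γ (s + u) - Γ s) 0 = ∫ t in s..s+u, Real.cos (β t) := by
      have e : (Γ (s + u) - Γ s) 0 = Γ (s + u) 0 - Γ s 0 := rfl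
      rw [e, hΓ, hΓ]
      simp only [WithLp.equiv_symm_apply, WithLp.ofLp_toLp, PiLp.toLp_apply, Matrix.cons_val_zero]
      rw [← intervalIntegral.integral_add_adjacent_intervals
        (hcβcont.intervalIntegrable 0 s) (hcβcont.intervalIntegrable s (s+u))]
      ring
    have h1 : (Γ (s + u) - Γ s) 1 = ∫ t in s..s+u, Real.sin (β t) := by
      have e : (Γ (s + u) - Γ s) 1 = Γ (s + u) 1 - Γ s 1 := rfl
      rw [e, hΓ, hΓ]
      simp only [WithLp.equiv_symm_apply, WithLp.ofLp_toLp, PiLp.toLp_apply, Matrix.cons_val_one, Matrix.head_cons, Matrix.cons_val_zero]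
      rw [← intervalIntegral.integral_add_adjacent_intervals
        (hsβcont.intervalIntegrable 0 s) (hsβcont.intervalIntegrable s (s+u))]
      ring
    rw [EuclideanSpace.norm_eq, Real.sq_sqrt (by positivity), Fin.sum_univ_two, h0, h1]
    simp [Real.norm_eq_abs, sq_abs]
  -- chord squared as a double integral
  have hdouble : ∀ s, ‖Γ (s + u) - Γ s‖ ^ 2
      = ∫ a in (0:ℝ)..u, ∫ b in (0:ℝ)..u, Real.cos (β (s + a) - β (s + b)) := by
    intro s
    have hAe : (∫ t in s..s+u, Real.cos (β t)) = ∫ b in (0:ℝ)..u, Real.cos (β (s + b)) := by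
      rw [intervalIntegral.integral_comp_add_left (fun t => Real.cos (β t)) s]
      norm_num
    have hBe : (∫ t in s..s+u, Real.sin (β t)) = ∫ b in (0:ℝ)..u, Real.sin (β (s + b)) := by
      rw [intervalIntegral.integral_comp_add_left (fun t => Real.sin (β t)) s]
      norm_num
    set A := ∫ b in (0:ℝ)..u, Real.cos (β (s + b)) with hA
    set B := ∫ b in (0:ℝ)..u, Real.sin (β (s + b)) with hB
    have e1 : (∫ a in (0:ℝ)..u, Real.cos (β (s + a)) * A) = A * A := by
      rw [intervalIntegral.integral_mul_const, ← hA]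
    have e2 : (∫ a in (0:ℝ)..u, Real.sin (β (s + a)) * B) = B * B := by
      rw [intervalIntegral.integral_mul_const, ← hB]
    have expand : A ^ 2 + B ^ 2
        = ∫ a in (0:ℝ)..u, (Real.cos (β (s + a)) * A + Real.sin (β (s + a)) * B) := by
      rw [intervalIntegral.integral_add (f := fun a => Real.cos (β (s + a)) * A)
        (g := fun a => Real.sin (β (s + a)) * B) (((hcsb s).mul continuous_const).intervalIntegrable 0 u)
        (((hssb s).mul continuous_const).intervalIntegrable 0 u), e1, e2]
      ring
    rw [hnorm s, hAe, hBe, expand]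
    apply intervalIntegral.integral_congr
    intro a _
    show Real.cos (β (s + a)) * (∫ b in (0:ℝ)..u, Real.cos (β (s + b)))
        + Real.sin (β (s + a)) * (∫ b in (0:ℝ)..u, Real.sin (β (s + b)))
      = ∫ b in (0:ℝ)..u, Real.cos (β (s + a) - β (s + b))
    rw [← intervalIntegral.integral_const_mul, ← intervalIntegral.integral_const_mul,
      ← intervalIntegral.integral_add (f := fun b => Real.cos (β (s + a)) * Real.cos (β (s + b)))
        (g := fun b => Real.sin (β (s + a)) * Real.sin (β (s + b))) ((continuous_const.mul (hcsb s)).intervalIntegrable 0 u)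
        ((continuous_const.mul (hssb s)).intervalIntegrable 0 u)]
    apply intervalIntegral.integral_congr
    intro b _
    show Real.cos (β (s + a)) * Real.cos (β (s + b)) + Real.sin (β (s + a)) * Real.sin (β (s + b))
      = Real.cos (β (s + a) - β (s + b))
    rw [Real.cos_sub]
  -- Fubini
  have hswap : (∫ s in (0:ℝ)..L, ∫ a in (0:ℝ)..u, ∫ b in (0:ℝ)..u,
        Real.cos (β (s + a) - β (s + b)))
      = ∫ a in (0:ℝ)..u, ∫ b in (0:ℝ)..u, ∫ s in (0:ℝ)..L,
        Real.cos (β (s + a) - β (s + b)) := by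
    have hF1 : Continuous (Function.uncurry fun s a => ∫ b in (0:ℝ)..u,
        Real.cos (β (s + a) - β (s + b))) := by
      apply intervalIntegral.continuous_parametric_intervalIntegral_of_continuous'
        (f := fun p : ℝ × ℝ => fun b => Real.cos (β (p.1 + p.2) - β (p.1 + b)))
      exact hccdiff
    rw [intervalIntegral_swap_of_continuous hF1 hL.le hu0.le]
    apply intervalIntegral.integral_congr
    intro a _
    have hF2 : Continuous (Function.uncurry fun s b => Real.cos (β (s + a) - β (s + b))) :=
      Real.continuous_cos.comp
        ((hβcont.comp (continuous_fst.add continuous_const)).sub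
         (hβcont.comp (continuous_fst.add continuous_snd)))
    exact intervalIntegral_swap_of_continuous hF2 hL.le hu0.le
  -- inner integral is the autocorrelation function
  have hinner : ∀ a b : ℝ, (∫ s in (0:ℝ)..L, Real.cos (β (s + a) - β (s + b))) = h (a - b) := by
    intro a b
    have hperiodic : Function.Periodic (fun s => Real.cos (Δ (a - b) s)) L :=
      (hΔper (a - b)).comp Real.cos
    have e : ∀ s : ℝ, Real.cos (β (s + a) - β (s + b))
        = (fun t => Real.cos (Δ (a - b) t)) (s + b) := by
      intro s
      simp only [hΔ]
      rw [show s + b + (a - b) = s + a by ring]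
    calc (∫ s in (0:ℝ)..L, Real.cos (β (s + a) - β (s + b)))
        = ∫ s in (0:ℝ)..L, (fun t => Real.cos (Δ (a - b) t)) (s + b) :=
          intervalIntegral.integral_congr (fun s _ => e s)
      _ = ∫ s in (0:ℝ)..L, Real.cos (Δ (a - b) s) :=
          periodic_shift_intervalIntegral hperiodic b
      _ = h (a - b) := rfl
  -- the two-sided bound
  have hbound : ∀ x : ℝ, |x| ≤ u → h x ≤ L * Real.cos (c * x) := by
    intro x hx
    rcases lt_trichotomy x 0 with hneg | hzero | hpos
    · have : h x = h (-(-x)) := by ring_nf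
      rw [show x = -(-x) by ring, hheven (-x)]
      rw [show c * - -x = -(c * -x) by ring, Real.cos_neg]
      exact (hkey (-x) ⟨by linarith, by rwa [abs_of_neg hneg] at hx⟩).1
    · subst hzero
      have : h 0 = L := by
        simp only [hh]
        have : ∀ s : ℝ, Real.cos (Δ 0 s) = 1 := by
          intro s
          simp [hΔ]
        rw [intervalIntegral.integral_congr (fun s _ => this s)]
        simp
      rw [this]
      simp
    · exact (hkey x ⟨hpos, by rwa [abs_of_pos hpos] at hx⟩).1
  -- model integrals
  have hccont : Continuous fun b : ℝ => Real.cos (c * b) :=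
    Real.continuous_cos.comp (continuous_const.mul continuous_id)
  have hscont : Continuous fun b : ℝ => Real.sin (c * b) :=
    Real.continuous_sin.comp (continuous_const.mul continuous_id)
  have hIc : (∫ b in (0:ℝ)..u, Real.cos (c * b)) = Real.sin (c * u) / c := by
    rw [intervalIntegral.integral_comp_mul_left (fun y => Real.cos y) hc0.ne']
    rw [integral_cos]
    simp [mul_zero]
    field_simp
  have hIs : (∫ b in (0:ℝ)..u, Real.sin (c * b)) = (1 - Real.cos (c * u)) / c := by
    rw [intervalIntegral.integral_comp_mul_left (fun y => Real.sin y) hc0.ne']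
    rw [integral_sin]
    simp [mul_zero]
    field_simp
  have hGa : ∀ a : ℝ, (∫ b in (0:ℝ)..u, L * Real.cos (c * (a - b)))
      = (L * (Real.sin (c * u) / c)) * Real.cos (c * a)
        + (L * ((1 - Real.cos (c * u)) / c)) * Real.sin (c * a) := by
    intro a
    calc (∫ b in (0:ℝ)..u, L * Real.cos (c * (a - b)))
        = ∫ b in (0:ℝ)..u, ((L * Real.cos (c * a)) * Real.cos (c * b)
            + (L * Real.sin (c * a)) * Real.sin (c * b)) := by
          apply intervalIntegral.integral_congr
          intro b _
          show L * Real.cos (c * (a - b)) = (L * Real.cos (c * a)) * Real.cos (c * b)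
            + (L * Real.sin (c * a)) * Real.sin (c * b)
          rw [mul_sub, Real.cos_sub]
          ring
      _ = (L * Real.cos (c * a)) * (∫ b in (0:ℝ)..u, Real.cos (c * b))
            + (L * Real.sin (c * a)) * (∫ b in (0:ℝ)..u, Real.sin (c * b)) := by
          rw [intervalIntegral.integral_add (f := fun b => (L * Real.cos (c * a)) * Real.cos (c * b))
            (g := fun b => (L * Real.sin (c * a)) * Real.sin (c * b))
            ((continuous_const.mul hccont).intervalIntegrable 0 u)
            ((continuous_const.mul hscont).intervalIntegrable 0 u),
            intervalIntegral.integral_const_mul, intervalIntegral.integral_const_mul]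
      _ = _ := by
          rw [hIc, hIs]
          ring
  have hGint : (∫ a in (0:ℝ)..u, ∫ b in (0:ℝ)..u, L * Real.cos (c * (a - b)))
      = L ^ 3 / π ^ 2 * Real.sin (π * u / L) ^ 2 := by
    calc (∫ a in (0:ℝ)..u, ∫ b in (0:ℝ)..u, L * Real.cos (c * (a - b)))
        = ∫ a in (0:ℝ)..u, ((L * (Real.sin (c * u) / c)) * Real.cos (c * a)
            + (L * ((1 - Real.cos (c * u)) / c)) * Real.sin (c * a)) :=
          intervalIntegral.integral_congr (fun a _ => hGa a)
      _ = (L * (Real.sin (c * u) / c)) * (∫ a in (0:ℝ)..u, Real.cos (c * a))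
            + (L * ((1 - Real.cos (c * u)) / c)) * (∫ a in (0:ℝ)..u, Real.sin (c * a)) := by
          rw [intervalIntegral.integral_add (f := fun a => (L * (Real.sin (c * u) / c)) * Real.cos (c * a))
            (g := fun a => (L * ((1 - Real.cos (c * u)) / c)) * Real.sin (c * a))
            ((continuous_const.mul hccont).intervalIntegrable 0 u)
            ((continuous_const.mul hscont).intervalIntegrable 0 u),
            intervalIntegral.integral_const_mul, intervalIntegral.integral_const_mul]
      _ = L * ((Real.sin (c * u) / c) * (Real.sin (c * u) / c)
            + ((1 - Real.cos (c * u)) / c) * ((1 - Real.cos (c * u)) / c)) := by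
          rw [hIc, hIs]
          ring
      _ = L ^ 3 / π ^ 2 * Real.sin (π * u / L) ^ 2 := by
          have hcu : c * u = 2 * (π * u / L) := by rw [hc]; field_simp
          have pyth := Real.sin_sq_add_cos_sq (π * u / L)
          rw [hcu, Real.sin_two_mul, Real.cos_two_mul, hc]
          field_simp
          linear_combination (4 * (Real.cos (π * u / L) ^ 2 - 1)) * pyth
  -- the strict inequality between the iterated integrals
  have hmain : (∫ a in (0:ℝ)..u, ∫ b in (0:ℝ)..u, h (a - b))
      < ∫ a in (0:ℝ)..u, ∫ b in (0:ℝ)..u, L * Real.cos (c * (a - b)) := by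
    apply intervalIntegral.integral_lt_integral_of_continuousOn_of_le_of_exists_lt hu0
    · apply Continuous.continuousOn
      apply intervalIntegral.continuous_parametric_intervalIntegral_of_continuous'
        (f := fun a b => h (a - b))
      exact hhcont.comp (continuous_fst.sub continuous_snd)
    · apply Continuous.continuousOn
      apply intervalIntegral.continuous_parametric_intervalIntegral_of_continuous'
        (f := fun a b => L * Real.cos (c * (a - b)))
      exact continuous_const.mul (Real.continuous_cos.comp
        (continuous_const.mul (continuous_fst.sub continuous_snd)))
    · intro a ha
      apply intervalIntegral.integral_mono_on hu0.le
        ((hhcont.comp (continuous_const.sub continuous_id)).intervalIntegrable 0 u)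
        ((continuous_const.mul (Real.continuous_cos.comp
          (continuous_const.mul (continuous_const.sub continuous_id)))).intervalIntegrable 0 u)
      intro b hb
      exact hbound (a - b) (abs_le.mpr ⟨by linarith [ha.1, hb.2], by linarith [ha.2, hb.1]⟩)
    · refine ⟨x₀, ⟨hx₀.1.le, hx₀.2⟩, ?_⟩
      apply intervalIntegral.integral_lt_integral_of_continuousOn_of_le_of_exists_lt hu0
      · exact (hhcont.comp (continuous_const.sub continuous_id)).continuousOn
      · exact (continuous_const.mul (Real.continuous_cos.comp
          (continuous_const.mul (continuous_const.sub continuous_id)))).continuousOn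
      · intro b hb
        exact hbound (x₀ - b) (abs_le.mpr ⟨by linarith [hx₀.1, hb.2], by linarith [hx₀.2, hb.1]⟩)
      · exact ⟨0, ⟨le_refl 0, hu0.le⟩, by simpa using hx₀strict⟩
  -- conclusion
  calc (∫ s in (0:ℝ)..L, ‖Γ (s + u) - Γ s‖ ^ 2)
      = ∫ s in (0:ℝ)..L, ∫ a in (0:ℝ)..u, ∫ b in (0:ℝ)..u, Real.cos (β (s + a) - β (s + b)) :=
        intervalIntegral.integral_congr (fun s _ => hdouble s)
    _ = ∫ a in (0:ℝ)..u, ∫ b in (0:ℝ)..u, ∫ s in (0:ℝ)..L, Real.cos (β (s + a) - β (s + b)) :=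
        hswap
    _ = ∫ a in (0:ℝ)..u, ∫ b in (0:ℝ)..u, h (a - b) :=
        intervalIntegral.integral_congr (fun a _ =>
          intervalIntegral.integral_congr (fun b _ => hinner a b))
    _ < ∫ a in (0:ℝ)..u, ∫ b in (0:ℝ)..u, L * Real.cos (c * (a - b)) := hmain
    _ = L ^ 3 / π ^ 2 * Real.sin (π * u / L) ^ 2 := hGint
end

section
/- Define F₁(v) := ∫₀^v (v − y) cos(2y) sin(y) dy. Then F₁(v) = (1/18)(9 sin v − sin 3v − 6v) for all v ∈ ℝ, and F₁(v) > 0 for every v ∈ (0, π/2]; in particular F₁(π/2) = (10 − 3π)/18 > 0. -/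
open MeasureTheory Real

private lemma F1_hasDerivAt (v y : ℝ) :
    HasDerivAt (fun t : ℝ => v * (-Real.cos (3*t)/6 + Real.cos t/2)
      - (1/2) * (Real.sin (3*t)/9 - t*Real.cos (3*t)/3 - Real.sin t + t*Real.cos t))
      ((v - y) * Real.cos (2 * y) * Real.sin y) y := by
  have h3 : HasDerivAt (fun t : ℝ => (3:ℝ)*t) 3 y := by
    simpa using (hasDerivAt_id y).const_mul (3:ℝ)
  have hc3 : HasDerivAt (fun t : ℝ => Real.cos (3*t)) (-Real.sin (3*y) * 3) y :=
    (Real.hasDerivAt_cos (3*y)).comp y h3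
  have hs3 : HasDerivAt (fun t : ℝ => Real.sin (3*t)) (Real.cos (3*y) * 3) y :=
    (Real.hasDerivAt_sin (3*y)).comp y h3
  have hc : HasDerivAt Real.cos (-Real.sin y) y := Real.hasDerivAt_cos y
  have hs : HasDerivAt Real.sin (Real.cos y) y := Real.hasDerivAt_sin y
  have hyc3 : HasDerivAt (fun t : ℝ => t * Real.cos (3*t))
      (1 * Real.cos (3*y) + y * (-Real.sin (3*y) * 3)) y := (hasDerivAt_id y).mul hc3
  have hyc : HasDerivAt (fun t : ℝ => t * Real.cos t)
      (1 * Real.cos y + y * (-Real.sin y)) y := (hasDerivAt_id y).mul hc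
  have H := (((hc3.div_const 6).neg.add (hc.div_const 2)).const_mul v).sub
    (((((hs3.div_const 9).sub (hyc3.div_const 3)).sub hs).add hyc).const_mul (1/2))
  have hid : Real.sin (3*y) - Real.sin y = 2 * Real.cos (2*y) * Real.sin y := by
    rw [show (3:ℝ)*y = 2*y + y by ring, Real.sin_add, Real.sin_two_mul, Real.cos_two_mul]
    ring
  have key : ∀ {f g : ℝ → ℝ} {a b : ℝ}, f = g → a = b → HasDerivAt g b y → HasDerivAt f a y := by
    rintro _ _ _ _ rfl rfl h; exact h
  refine key ?_ ?_ H
  · funext t; simp only [Pi.sub_apply, Pi.add_apply, Pi.neg_apply]; ring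
  · linear_combination (-(v - y) / 2) * hid

private lemma F1_eval (v : ℝ) :
    (∫ y in (0:ℝ)..v, (v - y) * Real.cos (2 * y) * Real.sin y)
      = 1 / 18 * (9 * Real.sin v - Real.sin (3 * v) - 6 * v) := by
  rw [intervalIntegral.integral_eq_sub_of_hasDerivAt
      (fun y _ => F1_hasDerivAt v y)
      (by apply Continuous.intervalIntegrable; continuity)]
  norm_num
  ring

private lemma cos_cubic_pos {w : ℝ} (hw0 : 0 ≤ w) (hwle : w ≤ 0.58) :
    0 < 3 * Real.cos w + 2 * (Real.cos w)^3 - 3 * (π/2 - w) := by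
  have hπ : π < 3.15 := by
    have := Real.pi_lt_d2
    norm_num at this ⊢
    linarith
  have hlb : 1 - w^2/2 ≤ Real.cos w := Real.one_sub_sq_div_two_le_cos
  have hc0 : (0:ℝ) < 1 - w^2/2 := by nlinarith
  have hcw0 : 0 < Real.cos w := lt_of_lt_of_le hc0 hlb
  have hmono : 3 * (1 - w^2/2) + 2 * (1 - w^2/2)^3 ≤ 3 * Real.cos w + 2 * (Real.cos w)^3 := by
    nlinarith [sq_nonneg (Real.cos w + (1 - w^2/2)), sq_nonneg (Real.cos w - (1 - w^2/2))]
  have hpoly : 0 < 3 * (1 - w^2/2) + 2 * (1 - w^2/2)^3 - 3 * (π/2 - w) := by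
    have h1 : 0 ≤ w * (3 - 4.5 * w) := mul_nonneg hw0 (by linarith)
    have h2 : 0 ≤ w^4 * (1.5 - 0.25 * w^2) := by
      apply mul_nonneg (pow_nonneg hw0 4); nlinarith
    nlinarith [h1, h2]
  linarith

private lemma h_pos {v : ℝ} (h0 : 0 < v) (h2 : v ≤ π/2) :
    0 < 3 * Real.sin v + 2 * (Real.sin v)^3 - 3 * v := by
  rcases le_or_gt v 1 with hv1 | hv1
  · have hs : v - v^3/4 < Real.sin v := by have := Real.sin_gt_sub_cube h0; nlinarith [pow_pos h0 3]
    have hv3 : v^3 ≤ v := by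
      nlinarith [mul_nonneg (mul_nonneg (sub_nonneg.2 hv1) (by linarith : (0:ℝ) ≤ 1+v)) h0.le]
    have hp0 : 0 < v - v^3/4 := by linarith
    have hs0 : 0 < Real.sin v := by linarith
    have hcube : (v - v^3/4)^3 < (Real.sin v)^3 := by
      exact pow_lt_pow_left₀ hs hp0.le (by norm_num)
    have ha : (3/4:ℝ) ≤ 1 - v^2/4 := by nlinarith
    have ha3 : (3/4:ℝ)^3 ≤ (1 - v^2/4)^3 :=
      pow_le_pow_left₀ (by norm_num) ha 3
    have hkey : 0 < 3 * (v - v^3/4) + 2 * (v - v^3/4)^3 - 3 * v := by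
      nlinarith [pow_pos h0 3, ha3]
    linarith
  · have hw0 : 0 ≤ π/2 - v := by linarith
    have hπ : π < 3.15 := by
      have := Real.pi_lt_d2
      norm_num at this ⊢
      linarith
    have hwle : π/2 - v ≤ 0.58 := by linarith
    have hcos : Real.sin v = Real.cos (π/2 - v) := (Real.cos_pi_div_two_sub v).symm
    have := cos_cubic_pos hw0 hwle
    rw [hcos]
    have hv : v = π/2 - (π/2 - v) := by ring
    nlinarith [this]

/-- The function `F₁(v) = ∫₀ᵛ (v-y) cos(2y) sin(y) dy` equals
`(1/18)(9 sin v − sin 3v − 6v)` and is positive on `(0, π/2]`; in particular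
`F₁(π/2) = (10 − 3π)/18 > 0`. -/
theorem F_one_formula_and_positive
    (F₁ : ℝ → ℝ)
    (hF₁ : ∀ v : ℝ, F₁ v = ∫ y in (0:ℝ)..v, (v - y) * Real.cos (2 * y) * Real.sin y) :
    (∀ v : ℝ, F₁ v = 1 / 18 * (9 * Real.sin v - Real.sin (3 * v) - 6 * v)) ∧
    (∀ v ∈ Set.Ioc (0:ℝ) (π / 2), 0 < F₁ v) ∧
    F₁ (π / 2) = (10 - 3 * π) / 18 ∧ 0 < (10 - 3 * π) / 18 := by
  have hform : ∀ v : ℝ, F₁ v = 1 / 18 * (9 * Real.sin v - Real.sin (3 * v) - 6 * v) := by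
    intro v; rw [hF₁ v]; exact F1_eval v
  have hπ : π < 3.15 := by
    have := Real.pi_lt_d2
    norm_num at this ⊢
    linarith
  refine ⟨hform, ?_, ?_, by linarith⟩
  · intro v hv
    rw [hform v, Real.sin_three_mul]
    have := h_pos hv.1 hv.2
    nlinarith
  · rw [hform, Real.sin_pi_div_two, show 3 * (π/2) = π + π/2 by ring,
      Real.sin_add, Real.sin_pi, Real.cos_pi, Real.sin_pi_div_two]
    ring
end

section
/- For every x ∈ (0, π/2), sin² x > x² − (4/(3π)) x³. -/
open Real

lemma sin_gt_sub_cube6 (x : ℝ) (hx : 0 < x) : x - x ^ 3 / 6 < Real.sin x := by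
  have key : StrictMonoOn (fun y : ℝ => Real.sin y - y + y ^ 3 / 6) (Set.Ici 0) := by
    apply strictMonoOn_of_deriv_pos (convex_Ici 0)
    · fun_prop
    · intro y hy
      rw [interior_Ici] at hy
      have hy0 : (0:ℝ) < y := hy
      have hcos := Real.one_sub_sq_div_two_lt_cos (x := y) (ne_of_gt hy0)
      have hd : HasDerivAt (fun y : ℝ => Real.sin y - y + y ^ 3 / 6)
          (Real.cos y - 1 + y ^ 2 / 2) y := by
        have h1 := ((Real.hasDerivAt_sin y).sub (hasDerivAt_id y)).add
          ((hasDerivAt_pow 3 y).div_const 6)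
        refine (h1 : HasDerivAt (fun y : ℝ => Real.sin y - y + y ^ 3 / 6) _ y).congr_deriv ?_
        rw [show (3:ℕ) - 1 = 2 from rfl]; push_cast
        ring
      rw [hd.deriv]
      linarith
  have h := key (Set.self_mem_Ici) (Set.mem_Ici.mpr hx.le) hx
  simp only [Real.sin_zero] at h
  norm_num at h
  linarith

/-- The elementary inequality `sin² x > x² − (4/3π) x³` on `(0, π/2)`. -/
theorem sin_sq_gt (x : ℝ) (hx : x ∈ Set.Ioo 0 (π / 2)) :
    x ^ 2 - 4 / (3 * π) * x ^ 3 < Real.sin x ^ 2 := by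
  obtain ⟨hx0, hx2⟩ := hx
  have hpi : (3.1415 : ℝ) < π := by
    have := Real.pi_gt_d6; linarith
  have hpi' : π < 3.1416 := by
    have := Real.pi_lt_d6; linarith
  have hpi0 : (0:ℝ) < π := by linarith
  have hs := sin_gt_sub_cube6 x hx0
  have hxlt : x < 1.5708 := by nlinarith
  have hcube : x ^ 3 ≤ x * 1.5708 ^ 2 := by nlinarith [mul_nonneg hx0.le (mul_nonneg (by linarith : (0:ℝ) ≤ 1.5708 - x) (by linarith : (0:ℝ) ≤ 1.5708 + x))]
  have hpos : 0 < x - x ^ 3 / 6 := by nlinarith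
  have hsq : (x - x ^ 3 / 6) ^ 2 < Real.sin x ^ 2 := by nlinarith
  have hprod : (0:ℝ) ≤ (1.5708 - x) * (12 - 1.5708 ^ 2 - 1.5708 * x - x ^ 2) := by
    apply mul_nonneg (by linarith)
    nlinarith
  have hm : x - x ^ 3 / 12 ≤ 1.5708 - 1.5708 ^ 3 / 12 := by nlinarith
  have hm0 : 0 < x - x ^ 3 / 12 := by nlinarith
  have h1 : x - x ^ 3 / 12 ≤ 4 / π := by
    rw [le_div_iff₀ hpi0]
    nlinarith [mul_le_mul hm hpi'.le hpi0.le (by norm_num)]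
  have key : x ^ 2 - 4 / (3 * π) * x ^ 3 ≤ (x - x ^ 3 / 6) ^ 2 := by
    have e : (x - x ^ 3 / 6) ^ 2 = x ^ 2 - x ^ 3 / 3 * (x - x ^ 3 / 12) := by ring
    rw [e]
    have h2 : x ^ 3 / 3 * (x - x ^ 3 / 12) ≤ x ^ 3 / 3 * (4 / π) :=
      mul_le_mul_of_nonneg_left h1 (by positivity)
    have e2 : x ^ 3 / 3 * (4 / π) = 4 / (3 * π) * x ^ 3 := by
      field_simp
    linarith
  linarith
end

section
/- Let L > 0 and u ∈ (0, L/2]. For R > L/(4π) define c²(R, u) := 8R³ [ (L/(2R)) sin²(u/(2R)) + 4( (u/(2R)) cos(u/(2R)) − sin(u/(2R)) ) cos(L/(4R)) cos((L − 2u)/(4R)) ]. Then c²(R, u) ≤ (L³/π²)·sin²(πu/L) for all R > L/(4π), with equality if and only if R = L/(2π). -/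
open Real

open Set


lemma aux_nonneg_of_deriv {F F' : ℝ → ℝ} (hd : ∀ x, HasDerivAt F (F' x) x)
    (h0 : F 0 = 0) (hp : ∀ x, 0 ≤ x → 0 ≤ F' x) :
    ∀ x, 0 ≤ x → 0 ≤ F x := by
  have hmono : MonotoneOn F (Ici 0) := by
    refine monotoneOn_of_deriv_nonneg (convex_Ici 0)
      (fun x _ => (hd x).continuousAt.continuousWithinAt)
      (fun x hx => (hd x).differentiableAt.differentiableWithinAt) ?_
    intro x hx
    rw [interior_Ici] at hx
    rw [(hd x).deriv]
    exact hp x (le_of_lt hx)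
  intro x hx
  have := hmono (self_mem_Ici) (mem_Ici.2 hx) hx
  rwa [h0] at this

lemma aux_pos_of_deriv {F F' : ℝ → ℝ} (hd : ∀ x, HasDerivAt F (F' x) x)
    (h0 : F 0 = 0) (hp : ∀ x, 0 < x → x < π → 0 < F' x) :
    ∀ x, 0 < x → x < π → 0 < F x := by
  have hmono : StrictMonoOn F (Icc 0 π) := by
    refine strictMonoOn_of_deriv_pos (convex_Icc 0 π)
      (fun x _ => (hd x).continuousAt.continuousWithinAt) ?_
    intro x hx
    rw [interior_Icc] at hx
    rw [(hd x).deriv]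
    exact hp x hx.1 hx.2
  intro x hx hxpi
  have := hmono (left_mem_Icc.2 pi_nonneg) ⟨le_of_lt hx, le_of_lt hxpi⟩ hx
  rwa [h0] at this

/-- sin x ≥ x - x^3/6 for x ≥ 0 -/
lemma aux_sin_ge (x : ℝ) (hx : 0 ≤ x) : x - x ^ 3 / 6 ≤ sin x := by
  have h := aux_nonneg_of_deriv (F := fun x => sin x - x + x ^ 3 / 6)
    (F' := fun x => cos x - 1 + x ^ 2 / 2) ?_ (by norm_num) ?_ x hx
  · linarith
  · intro y
    have h1 : HasDerivAt (fun x : ℝ => sin x) (cos y) y := hasDerivAt_sin y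
    have h2 : HasDerivAt (fun x : ℝ => x ^ 3 / 6) (y ^ 2 / 2) y := by
      have := (hasDerivAt_pow 3 y).div_const 6
      exact this.congr_deriv (by ring)
    have := (h1.sub (hasDerivAt_id y)).add h2
    exact this.congr_deriv (by ring)
  · intro y _
    have := one_sub_sq_div_two_le_cos (x := y)
    linarith

/-- g x := sin x - x cos x; basic derivative facts bundled -/
lemma aux_g_hasDeriv (y : ℝ) : HasDerivAt (fun x => sin x - x * cos x) (y * sin y) y := by
  have h1 : HasDerivAt (fun x : ℝ => x * cos x) (1 * cos y + y * -sin y) y :=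
    (hasDerivAt_id y).mul (hasDerivAt_cos y)
  have := (hasDerivAt_sin y).sub h1
  exact this.congr_deriv (by ring)

lemma aux_g_pos (a : ℝ) (h0 : 0 < a) (hpi : a < π) : 0 < sin a - a * cos a := by
  have := aux_pos_of_deriv (F := fun x => sin x - x * cos x) (F' := fun x => x * sin x)
    aux_g_hasDeriv (by norm_num) ?_ a h0 hpi
  · exact this
  · intro y hy hypi
    exact mul_pos hy (sin_pos_of_pos_of_lt_pi hy hypi)

lemma aux_g_le (x : ℝ) (hx : 0 ≤ x) : sin x - x * cos x ≤ x ^ 3 / 3 := by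
  have h := aux_nonneg_of_deriv (F := fun x => x ^ 3 / 3 - (sin x - x * cos x))
    (F' := fun x => x ^ 2 - x * sin x) ?_ (by norm_num) ?_ x hx
  · linarith
  · intro y
    have h2 : HasDerivAt (fun x : ℝ => x ^ 3 / 3) (y ^ 2) y := by
      have := (hasDerivAt_pow 3 y).div_const 3
      exact this.congr_deriv (by ring)
    have := h2.sub (aux_g_hasDeriv y)
    exact this.congr_deriv (by ring)
  · intro y hy
    have hsy : sin y ≤ y := by
      rcases eq_or_lt_of_le hy with h | h
      · simp [← h]
      · exact (sin_lt h).le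
    nlinarith

lemma aux_g_ge (x : ℝ) (hx : 0 ≤ x) : x ^ 3 / 3 - x ^ 5 / 30 ≤ sin x - x * cos x := by
  have h := aux_nonneg_of_deriv (F := fun x => (sin x - x * cos x) - x ^ 3 / 3 + x ^ 5 / 30)
    (F' := fun x => x * sin x - x ^ 2 + x ^ 4 / 6) ?_ (by norm_num) ?_ x hx
  · linarith
  · intro y
    have h2 : HasDerivAt (fun x : ℝ => x ^ 3 / 3) (y ^ 2) y := by
      have := (hasDerivAt_pow 3 y).div_const 3
      exact this.congr_deriv (by ring)
    have h3 : HasDerivAt (fun x : ℝ => x ^ 5 / 30) (y ^ 4 / 6) y := by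
      have := (hasDerivAt_pow 5 y).div_const 30
      exact this.congr_deriv (by ring)
    have := ((aux_g_hasDeriv y).sub h2).add h3
    exact this.congr_deriv (by ring)
  · intro y hy
    have := aux_sin_ge y hy
    nlinarith

/-- φ x := x² sin x + 3 x cos x - 3 sin x -/
lemma aux_phi_hasDeriv (y : ℝ) :
    HasDerivAt (fun x => x ^ 2 * sin x + 3 * (x * cos x) - 3 * sin x)
      (-(y * (sin y - y * cos y))) y := by
  have h1 : HasDerivAt (fun x : ℝ => x ^ 2 * sin x) (2 * y * sin y + y ^ 2 * cos y) y := by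
    have := (hasDerivAt_pow 2 y).mul (hasDerivAt_sin y)
    exact this.congr_deriv (by ring)
  have h2 : HasDerivAt (fun x : ℝ => 3 * (x * cos x)) (3 * (1 * cos y + y * -sin y)) y :=
    ((hasDerivAt_id y).mul (hasDerivAt_cos y)).const_mul 3
  have h3 : HasDerivAt (fun x : ℝ => 3 * sin x) (3 * cos y) y := (hasDerivAt_sin y).const_mul 3
  have := (h1.add h2).sub h3
  exact this.congr_deriv (by ring)

lemma aux_phi_neg (a : ℝ) (h0 : 0 < a) (hpi : a < π) :
    a ^ 2 * sin a + 3 * (a * cos a) - 3 * sin a < 0 := by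
  have h := aux_pos_of_deriv (F := fun x => -(x ^ 2 * sin x + 3 * (x * cos x) - 3 * sin x))
    (F' := fun x => x * (sin x - x * cos x)) ?_ (by norm_num) ?_ a h0 hpi
  · linarith
  · intro y
    have := (aux_phi_hasDeriv y).neg
    exact this.congr_deriv (by ring)
  · intro y hy hypi
    exact mul_pos hy (aux_g_pos y hy hypi)

lemma aux_phi_ge (x : ℝ) (hx : 0 ≤ x) :
    -(x ^ 5 / 15) ≤ x ^ 2 * sin x + 3 * (x * cos x) - 3 * sin x := by
  have h := aux_nonneg_of_deriv
    (F := fun x => (x ^ 2 * sin x + 3 * (x * cos x) - 3 * sin x) + x ^ 5 / 15)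
    (F' := fun x => -(x * (sin x - x * cos x)) + x ^ 4 / 3) ?_ (by norm_num) ?_ x hx
  · linarith
  · intro y
    have h3 : HasDerivAt (fun x : ℝ => x ^ 5 / 15) (y ^ 4 / 3) y := by
      have := (hasDerivAt_pow 5 y).div_const 15
      exact this.congr_deriv (by ring)
    exact (aux_phi_hasDeriv y).add h3
  · intro y hy
    have := aux_g_le y hy
    nlinarith




set_option maxHeartbeats 1600000 in
/-- the core negativity: Q/4 < 0 -/
lemma aux_Qcore (a m : ℝ) (ha : 0 < a) (hm : 0 ≤ m) (ham : a + m < π) :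
    -((sin a - a * cos a) * ((a + 2 * m) * sin m)) +
      (a ^ 2 * sin a + 3 * (a * cos a) - 3 * sin a) * cos m < 0 := by
  have hapi : a < π := by linarith
  have hg := aux_g_pos a ha hapi
  have hφ := aux_phi_neg a ha hapi
  rcases eq_or_lt_of_le hm with hm0 | hm0
  · rw [← hm0]; simp; linarith
  · have hmpi : m < π := by linarith
    have hsinm : 0 < sin m := sin_pos_of_pos_of_lt_pi hm0 hmpi
    rcases le_or_gt 0 (cos m) with hcm | hcm
    · have h1 : 0 < (sin a - a * cos a) * ((a + 2 * m) * sin m) := by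
        apply mul_pos hg (mul_pos (by linarith) hsinm)
      nlinarith
    · -- cos m < 0, so m > π/2, a < π/2
      have hm2 : π / 2 < m := by
        by_contra h
        push_neg at h
        exact absurd (cos_nonneg_of_mem_Icc ⟨by linarith, h⟩) (by linarith)
      have ha2 : a < π / 2 := by linarith
      -- sin m = sin (π - m) > sin a
      have hsin_gt : sin a < sin m := by
        have hrw : sin m = sin (π - m) := (sin_pi_sub m).symm
        rw [hrw]
        exact strictMonoOn_sin ⟨by linarith, by linarith⟩ ⟨by linarith, by linarith⟩
          (by linarith)
      -- -cos m = cos (π - m) < cos a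
      have hcos_lt : -cos m < cos a := by
        have hrw : -cos m = cos (π - m) := by rw [cos_pi_sub]
        rw [hrw]
        exact strictAntiOn_cos ⟨by linarith, by linarith⟩ ⟨by linarith, by linarith⟩
          (by linarith)
      have hpi_lt : π < a + 2 * m := by linarith
      -- ψ : π g sin a ≥ -φ
      have hsa : 0 < sin a := sin_pos_of_pos_of_lt_pi ha hapi
      have hψ : -(a ^ 2 * sin a + 3 * (a * cos a) - 3 * sin a) ≤
          π * ((sin a - a * cos a) * sin a) := by
        have h1 := aux_phi_ge a ha.le
        have h2 := aux_g_ge a ha.le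
        have h3 := aux_sin_ge a ha.le
        have hpi3 : (3.14 : ℝ) ≤ π := by
          have := pi_gt_d2; linarith
        have ha16 : a ≤ 1.58 := by
          have := pi_lt_d2; linarith
        have hsq : a ^ 2 ≤ 2.4964 := by nlinarith
        have ha3 : (0:ℝ) < a ^ 3 := pow_pos ha 3
        have ha4 : (0:ℝ) < a ^ 4 := pow_pos ha 4
        have k1 : 0.25 * a ^ 3 ≤ a ^ 3 / 3 - a ^ 5 / 30 := by
          nlinarith [mul_nonneg ha3.le (by linarith : (0:ℝ) ≤ 2.5 - a ^ 2)]
        have k2 : 0.58 * a ≤ a - a ^ 3 / 6 := by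
          nlinarith [mul_nonneg ha.le (by linarith : (0:ℝ) ≤ 2.52 - a ^ 2)]
        have hgl : (0:ℝ) ≤ a ^ 3 / 3 - a ^ 5 / 30 := by nlinarith
        have hsl : (0:ℝ) ≤ a - a ^ 3 / 6 := by nlinarith
        have hprod : (a ^ 3 / 3 - a ^ 5 / 30) * (a - a ^ 3 / 6) ≤
            (sin a - a * cos a) * sin a := mul_le_mul h2 h3 hsl hg.le
        have hprod2 : (0.25 * a ^ 3) * (0.58 * a) ≤
            (a ^ 3 / 3 - a ^ 5 / 30) * (a - a ^ 3 / 6) :=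
          mul_le_mul k1 k2 (by nlinarith) hgl
        have hX : a ^ 5 / 15 ≤ 3.14 * ((a ^ 3 / 3 - a ^ 5 / 30) * (a - a ^ 3 / 6)) := by
          nlinarith [hprod2, ha4]
        have hgs : (0:ℝ) ≤ (sin a - a * cos a) * sin a :=
          le_trans (mul_nonneg hgl hsl) hprod
        have c1 : (3.14:ℝ) * ((a ^ 3 / 3 - a ^ 5 / 30) * (a - a ^ 3 / 6)) ≤
            3.14 * ((sin a - a * cos a) * sin a) :=
          mul_le_mul_of_nonneg_left hprod (by norm_num)
        have c2 : (3.14:ℝ) * ((sin a - a * cos a) * sin a) ≤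
            π * ((sin a - a * cos a) * sin a) :=
          mul_le_mul_of_nonneg_right hpi3 hgs
        linarith
      -- combine
      have hca : 0 < cos a := cos_pos_of_mem_Ioo ⟨by linarith, ha2⟩
      have hcos1 : cos a ≤ 1 := cos_le_one a
      -- first term: g (a+2m) sin m > g π sin a
      have t1 : π * ((sin a - a * cos a) * sin a) <
          (sin a - a * cos a) * ((a + 2 * m) * sin m) := by
        have e1 := mul_lt_mul_of_pos_left (mul_lt_mul_of_pos_left hsin_gt hg) pi_pos
        have e2 := mul_lt_mul_of_pos_right hpi_lt (mul_pos hg hsinm)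
        nlinarith [e1, e2]
      have t2 : (a ^ 2 * sin a + 3 * (a * cos a) - 3 * sin a) * cos m <
          -(a ^ 2 * sin a + 3 * (a * cos a) - 3 * sin a) * cos a := by
        nlinarith [mul_lt_mul_of_pos_left hcos_lt (neg_pos.2 hφ)]
      have t3 : -(a ^ 2 * sin a + 3 * (a * cos a) - 3 * sin a) * cos a ≤
          -(a ^ 2 * sin a + 3 * (a * cos a) - 3 * sin a) := by
        nlinarith
      linarith



noncomputable def Nf (v s : ℝ) : ℝ :=
  s * Real.sin (v*s)^2 +
    4*((v*s)*Real.cos (v*s) - Real.sin (v*s)) * Real.cos (s/2) * Real.cos (s/2 - v*s)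

noncomputable def Dexpr (v s : ℝ) : ℝ :=
  Real.sin (v*s)^2 + 2*s*v*Real.sin (v*s)*Real.cos (v*s)
  - 4*v^2*s*Real.sin (v*s)*Real.cos (s/2)*Real.cos (s/2 - v*s)
  - 2*((v*s)*Real.cos (v*s) - Real.sin (v*s))*Real.sin (s/2)*Real.cos (s/2 - v*s)
  - 4*((v*s)*Real.cos (v*s) - Real.sin (v*s))*Real.cos (s/2)*Real.sin (s/2 - v*s)*(1/2 - v)

noncomputable def Qf (v s : ℝ) : ℝ :=
  4*( -((Real.sin (v*s) - (v*s)*Real.cos (v*s)) * (((v*s) + 2*(s/2 - v*s)) * Real.sin (s/2 - v*s)))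
    + ((v*s)^2*Real.sin (v*s) + 3*((v*s)*Real.cos (v*s)) - 3*Real.sin (v*s)) * Real.cos (s/2 - v*s) )

noncomputable def Hf (v s : ℝ) : ℝ := Nf v s / s^3

lemma aux_N_deriv (v s : ℝ) : HasDerivAt (fun t => Nf v t) (Dexpr v s) s := by
  have h1 : HasDerivAt (fun t : ℝ => v*t) v s := by
    simpa using (hasDerivAt_id s).const_mul v
  have hsin := h1.sin
  have hcos := h1.cos
  have h2 : HasDerivAt (fun t : ℝ => t/2) (1/2) s := by
    simpa using (hasDerivAt_id s).div_const 2
  have h3 := h2.sub h1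
  have hN1 := (hasDerivAt_id s).mul (hsin.pow 2)
  have hG := (h1.mul hcos).sub hsin
  have hterm2 := ((hG.const_mul 4).mul h2.cos).mul h3.cos
  have H := hN1.add hterm2
  unfold Nf Dexpr
  refine H.congr_deriv ?_
  simp only [id_eq, Pi.mul_apply, Pi.sub_apply, Pi.pow_apply]
  push_cast
  ring

/-- key trig identity: s D - 3 N = -cos(s/2) Q -/
lemma aux_identity (v s : ℝ) :
    s * Dexpr v s - 3 * Nf v s = -Real.cos (s/2) * Qf v s := by
  unfold Nf Dexpr Qf
  rw [Real.sin_sub, Real.cos_sub]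
  linear_combination (-2*s + 2*s*Real.cos (s/2)^2 + 2*s*Real.sin (s/2)^2) *
      (Real.sin_sq_add_cos_sq (v*s)) +
    (-2*s^2*v*Real.sin (v*s)*Real.cos (v*s) + 2*s - 2*s*Real.cos (v*s)^2) *
      (Real.sin_sq_add_cos_sq (s/2))

lemma aux_H_deriv (v : ℝ) {s : ℝ} (hs : s ≠ 0) :
    HasDerivAt (Hf v) (-Real.cos (s/2) * Qf v s / s^4) s := by
  have hN := aux_N_deriv v s
  have hpow : HasDerivAt (fun t : ℝ => t^3) (3*s^2) s := by
    simpa using hasDerivAt_pow 3 s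
  have h := hN.div hpow (pow_ne_zero 3 hs)
  have heq : (Dexpr v s * s^3 - Nf v s * (3*s^2)) / (s^3)^2 =
      -Real.cos (s/2) * Qf v s / s^4 := by
    rw [← aux_identity v s]
    field_simp
  rw [heq] at h
  exact h








lemma aux_Qf_neg (v s : ℝ) (hv0 : 0 < v) (hv2 : v ≤ 1/2) (hs0 : 0 < s) (hs2 : s < 2*π) :
    Qf v s < 0 := by
  have h := aux_Qcore (v*s) (s/2 - v*s) (mul_pos hv0 hs0) (by nlinarith) (by linarith)
  unfold Qf
  nlinarith [h]

lemma aux_H_lt (v : ℝ) (hv0 : 0 < v) (hv2 : v ≤ 1/2) (s : ℝ)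
    (hs0 : 0 < s) (hs2 : s < 2*π) (hne : s ≠ π) : Hf v s < Hf v π := by
  have hπ := pi_pos
  have hmono : StrictMonoOn (Hf v) (Ioc 0 π) := by
    refine strictMonoOn_of_deriv_pos (convex_Ioc 0 π)
      (fun x hx => ((aux_H_deriv v (ne_of_gt hx.1)).continuousAt).continuousWithinAt) ?_
    intro x hx
    rw [interior_Ioc] at hx
    rw [(aux_H_deriv v (ne_of_gt hx.1)).deriv]
    have hQ := aux_Qf_neg v x hv0 hv2 hx.1 (by linarith [hx.2])
    have hcos : 0 < Real.cos (x/2) :=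
      cos_pos_of_mem_Ioo ⟨by linarith [hx.1], by linarith [hx.2]⟩
    apply div_pos ?_ (pow_pos hx.1 4)
    nlinarith [mul_pos hcos (neg_pos.2 hQ)]
  have hanti : StrictAntiOn (Hf v) (Ico π (2*π)) := by
    refine strictAntiOn_of_deriv_neg (convex_Ico π (2*π))
      (fun x hx => ((aux_H_deriv v (ne_of_gt (lt_of_lt_of_le hπ hx.1))).continuousAt).continuousWithinAt) ?_
    intro x hx
    rw [interior_Ico] at hx
    have hx0 : 0 < x := lt_trans hπ hx.1
    rw [(aux_H_deriv v (ne_of_gt hx0)).deriv]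
    have hQ := aux_Qf_neg v x hv0 hv2 hx0 hx.2
    have hcos : Real.cos (x/2) < 0 :=
      cos_neg_of_pi_div_two_lt_of_lt (by linarith [hx.1]) (by linarith [hx.2])
    apply div_neg_of_neg_of_pos ?_ (pow_pos hx0 4)
    nlinarith [mul_pos_of_neg_of_neg hcos hQ]
  rcases lt_or_gt_of_ne hne with h | h
  · exact hmono ⟨hs0, h.le⟩ ⟨hπ, le_rfl⟩ h
  · exact hanti ⟨le_rfl, by linarith⟩ ⟨h.le, hs2⟩ h

lemma aux_H_pi (v : ℝ) : Hf v π = Real.sin (v*π)^2 / π^2 := by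
  have hπ := pi_ne_zero
  unfold Hf Nf
  rw [Real.cos_pi_div_two]
  field_simp
  ring







/-- For the two-arc ("lens"/"apple"-shaped) curves of length `L` built from two
circular arcs of radius `R > L/(4π)`, the mean square chord `c²(R, u)` is
maximized exactly at `R = L/(2π)` (the circle), where it equals
`(L³/π²) sin²(πu/L)`. -/
theorem lens_mean_square_chord_max
    (L : ℝ) (hL : 0 < L) (u : ℝ) (hu : u ∈ Set.Ioc 0 (L / 2))
    (c2 : ℝ → ℝ)
    (hc2 : ∀ R : ℝ, c2 R = 8 * R ^ 3 *
        (L / (2 * R) * Real.sin (u / (2 * R)) ^ 2 +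
          4 * (u / (2 * R) * Real.cos (u / (2 * R)) - Real.sin (u / (2 * R))) *
            Real.cos (L / (4 * R)) * Real.cos ((L - 2 * u) / (4 * R)))) :
    ∀ R : ℝ, L / (4 * π) < R →
      c2 R ≤ L ^ 3 / π ^ 2 * Real.sin (π * u / L) ^ 2 ∧
      (c2 R = L ^ 3 / π ^ 2 * Real.sin (π * u / L) ^ 2 ↔ R = L / (2 * π)) := by
  obtain ⟨hu0, hu2⟩ := hu
  have hπ := pi_pos
  intro R hR
  have hR0 : 0 < R := lt_trans (by positivity) hR
  set v : ℝ := u / L with hvdef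
  set s : ℝ := L / (2 * R) with hsdef
  have hLne : L ≠ 0 := ne_of_gt hL
  have hRne : R ≠ 0 := ne_of_gt hR0
  have hv0 : 0 < v := div_pos hu0 hL
  have hv2 : v ≤ 1/2 := by rw [hvdef, div_le_iff₀ hL]; linarith
  have hs0 : 0 < s := div_pos hL (by positivity)
  have hs2 : s < 2*π := by
    rw [hsdef, div_lt_iff₀ (by positivity)]
    rw [div_lt_iff₀ (by positivity)] at hR
    linarith
  -- substitutions
  have hvs : v * s = u / (2*R) := by
    show (u/L) * (L/(2*R)) = u / (2*R)
    field_simp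
  have hhalf : s / 2 = L / (4*R) := by
    show (L/(2*R)) / 2 = L / (4*R)
    rw [div_div]
    ring_nf
  have hm : s / 2 - v * s = (L - 2*u) / (4*R) := by
    rw [hvs, hhalf]
    field_simp
    ring
  have hL3 : (0:ℝ) < L^3 := by positivity
  have hC : c2 R = L^3 * Hf v s := by
    rw [hc2 R]
    unfold Hf Nf
    rw [← hvs, ← hhalf, ← hm, ← hsdef]
    have h8 : L^3 = 8*R^3*s^3 := by rw [hsdef]; field_simp; ring
    rw [h8]
    have hs3 : s^3 ≠ 0 := pow_ne_zero 3 (ne_of_gt hs0)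
    field_simp
  have hQπ : L^3 / π^2 * Real.sin (π*u/L)^2 = L^3 * Hf v π := by
    rw [aux_H_pi]
    have : v * π = π * u / L := by rw [hvdef]; ring
    rw [this]
    ring
  have hiff : s = π ↔ R = L / (2*π) := by
    rw [hsdef]
    constructor
    · intro h
      rw [div_eq_iff (by positivity : (2*R) ≠ 0)] at h
      rw [eq_div_iff (by positivity : (2*π) ≠ 0)]
      linarith
    · intro h
      rw [eq_div_iff (by positivity : (2*π) ≠ 0)] at h
      rw [div_eq_iff (by positivity : (2*R) ≠ 0)]
      linarith
  constructor
  · rw [hC, hQπ]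
    rcases eq_or_ne s π with h | h
    · rw [h]
    · have := aux_H_lt v hv0 hv2 s hs0 hs2 h
      nlinarith
  · rw [hC, hQπ]
    constructor
    · intro h
      have hHeq : Hf v s = Hf v π := mul_left_cancel₀ (ne_of_gt hL3) h
      refine hiff.1 ?_
      by_contra hne
      have := aux_H_lt v hv0 hv2 s hs0 hs2 hne
      rw [hHeq] at this
      exact lt_irrefl _ this
    · intro h
      rw [hiff.2 h]
end
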